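/- arXiv:2306.16130 — 7 statements merged into one kernel-verified Lean document; each statement's English description precedes it below -/
import Mathlib

section
/- The function f satisfies: f(0) = 0, f is strictly increasing (in particular nondecreasing), f(r) > 0 for every r > 0, and f is concave on [0,∞). -/
/-!
`f` is the primitive of `φ g`. The weight `φ = exp (-c ∫ s κ₋)` is positive and nonincreasing
because `κ₋ ≥ 0`. Since `Φ / φ ≥ 0`, the integral `∫₀^{min r R₁} Φ/φ` is nondecreasing in `r`,
and `ℓ` normalises it by its largest value, so `g` is nonincreasing with values in `[1/2, 1]`.
Hence `f' = φ g` is positive and nonincreasing on `[0, ∞)`, which makes `f` strictly increasing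
and concave there.
-/

open Set

namespace ContinuousOn

variable {u : ℝ → ℝ} {a : ℝ}

theorem intervalIntegrable_of_mem_Ici (hu : ContinuousOn u (Ici a)) {x y : ℝ}
    (hx : x ∈ Ici a) (hy : y ∈ Ici a) : IntervalIntegrable u MeasureTheory.volume x y :=
  (hu.mono (ordConnected_Ici.uIcc_subset hx hy)).intervalIntegrable

theorem continuousOn_primitive_Ici (hu : ContinuousOn u (Ici a)) :
    ContinuousOn (fun r => ∫ s in a..r, u s) (Ici a) := by
  intro x hx
  have hb : a ≤ x + 1 := by linarith [mem_Ici.1 hx]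
  have hIcc : ContinuousOn (fun r => ∫ s in a..r, u s) (Icc a (x + 1)) := by
    simpa [uIcc_of_le hb] using intervalIntegral.continuousOn_primitive_interval'
      (hu.intervalIntegrable_of_mem_Ici self_mem_Ici hb) left_mem_uIcc
  refine (hIcc x ⟨hx, by linarith⟩).mono_of_mem_nhdsWithin ?_
  simpa [Ici_inter_Iic] using inter_mem_nhdsWithin (Ici a) (Iic_mem_nhds (lt_add_one x))

theorem hasDerivAt_primitive (hu : ContinuousOn u (Ici a)) {x : ℝ} (hx : a < x) :
    HasDerivAt (fun r => ∫ s in a..r, u s) (u x) x :=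
  intervalIntegral.integral_hasDerivAt_right (hu.intervalIntegrable_of_mem_Ici self_mem_Ici hx.le)
    ((hu.mono Ioi_subset_Ici_self).stronglyMeasurableAtFilter isOpen_Ioi x hx)
    (hu.continuousAt (Ici_mem_nhds hx))

theorem monotoneOn_primitive (hu : ContinuousOn u (Ici a)) (hu0 : ∀ x ∈ Ici a, 0 ≤ u x) :
    MonotoneOn (fun r => ∫ s in a..r, u s) (Ici a) := by
  refine monotoneOn_of_deriv_nonneg (convex_Ici a) hu.continuousOn_primitive_Ici
    (fun x hx => ?_) (fun x hx => ?_) <;> rw [interior_Ici] at hx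
  · exact (hu.hasDerivAt_primitive hx).differentiableAt.differentiableWithinAt
  · rw [(hu.hasDerivAt_primitive hx).deriv]
    exact hu0 x (mem_Ici_of_Ioi hx)

theorem strictMonoOn_primitive (hu : ContinuousOn u (Ici a)) (hu0 : ∀ x ∈ Ici a, 0 < u x) :
    StrictMonoOn (fun r => ∫ s in a..r, u s) (Ici a) := by
  refine strictMonoOn_of_deriv_pos (convex_Ici a) hu.continuousOn_primitive_Ici fun x hx => ?_
  rw [interior_Ici] at hx
  rw [(hu.hasDerivAt_primitive hx).deriv]
  exact hu0 x (mem_Ici_of_Ioi hx)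

theorem concaveOn_primitive (hu : ContinuousOn u (Ici a)) (hanti : AntitoneOn u (Ici a)) :
    ConcaveOn ℝ (Ici a) (fun r => ∫ s in a..r, u s) := by
  refine AntitoneOn.concaveOn_of_deriv (convex_Ici a) hu.continuousOn_primitive_Ici
    (fun x hx => ?_) ?_ <;> rw [interior_Ici]
  · rw [interior_Ici] at hx
    exact (hu.hasDerivAt_primitive hx).differentiableAt.differentiableWithinAt
  · intro x hx y hy hxy
    rw [(hu.hasDerivAt_primitive hx).deriv, (hu.hasDerivAt_primitive hy).deriv]
    exact hanti (mem_Ici_of_Ioi hx) (mem_Ici_of_Ioi hy) hxy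

end ContinuousOn

theorem antitoneOn_exp_neg_mul_primitive {w : ℝ → ℝ} {a c : ℝ} (hw : ContinuousOn w (Ici a))
    (hw0 : ∀ s ∈ Ici a, 0 ≤ w s) (hc : 0 ≤ c) :
    AntitoneOn (fun r => Real.exp (-c * ∫ s in a..r, w s)) (Ici a) := fun _ hx _ hy hxy =>
  Real.exp_le_exp.2 <|
    mul_le_mul_of_nonpos_left (hw.monotoneOn_primitive hw0 hx hy hxy) (neg_nonpos.2 hc)

theorem AntitoneOn.mul {α : Type*} [Preorder α] {f g : α → ℝ} {s : Set α}
    (hf : AntitoneOn f s) (hg : AntitoneOn g s) (hf₀ : ∀ x ∈ s, 0 ≤ f x) (hg₀ : ∀ x ∈ s, 0 ≤ g x) :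
    AntitoneOn (f * g) s :=
  fun _ ha _ hb h => mul_le_mul (hf ha hb h) (hg ha hb h) (hg₀ _ hb) (hf₀ _ ha)

section CutoffProfile

variable {J : ℝ → ℝ} {R : ℝ}

theorem MonotoneOn.comp_min (hJ : MonotoneOn J (Ici 0)) :
    MonotoneOn (fun r => J (min r R)) (Ici 0) := by
  intro x hx y hy hxy
  rcases le_total R x with hRx | hxR
  · simp only [min_eq_right hRx, min_eq_right (hRx.trans hxy), le_rfl]
  · show J (min x R) ≤ J (min y R)
    rw [min_eq_left hxR]
    exact hJ hx (le_min hy (le_trans hx hxR)) (le_min hxy hxR)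

theorem ContinuousOn.comp_min (hJ : ContinuousOn J (Ici 0)) :
    ContinuousOn (fun r => J (min r R)) (Ici 0) := by
  rcases le_or_gt 0 R with hR | hR
  · exact hJ.comp (continuous_id.min continuous_const).continuousOn fun r hr => le_min hr hR
  · exact continuousOn_const.congr fun r hr => by rw [min_eq_right (hR.le.trans hr)]

/-- The function `g` of the paper, for `J r = ∫₀^r Φ/φ` and `ℓ = (J R₁)⁻¹`. -/
noncomputable def cutoffProfile (J : ℝ → ℝ) (R r : ℝ) : ℝ :=
  1 - (J R)⁻¹ * J (min r R) / 2

theorem continuousOn_cutoffProfile (hJ : ContinuousOn J (Ici 0)) :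
    ContinuousOn (cutoffProfile J R) (Ici 0) :=
  continuousOn_const.sub ((continuousOn_const.mul hJ.comp_min).div_const 2)

theorem one_half_le_cutoffProfile (hJ : MonotoneOn J (Ici 0)) (hJ0 : J 0 = 0) {r : ℝ}
    (hr : r ∈ Ici 0) : 1 / 2 ≤ cutoffProfile J R r := by
  suffices (J R)⁻¹ * J (min r R) ≤ 1 by unfold cutoffProfile; linarith
  rcases le_total R r with hRr | hrR
  · rw [min_eq_right hRr]
    exact inv_mul_le_one
  · rw [min_eq_left hrR]
    have hJr : J r ≤ J R := hJ hr (le_trans hr hrR) hrR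
    exact inv_mul_le_one_of_le₀ hJr (le_trans (hJ0 ▸ hJ self_mem_Ici hr hr) hJr)

theorem antitoneOn_cutoffProfile (hJ : MonotoneOn J (Ici 0)) (hJ0 : J 0 = 0) :
    AntitoneOn (cutoffProfile J R) (Ici 0) := by
  intro x hx y hy hxy
  suffices (J R)⁻¹ * J (min x R) ≤ (J R)⁻¹ * J (min y R) by unfold cutoffProfile; linarith
  rcases le_total R x with hRx | hxR
  · rw [min_eq_right hRx, min_eq_right (hRx.trans hxy)]
  · have hJR : 0 ≤ J R := hJ0 ▸ hJ self_mem_Ici (le_trans hx hxR) (le_trans hx hxR)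
    exact mul_le_mul_of_nonneg_left (hJ.comp_min hx hy hxy) (inv_nonneg.2 hJR)

end CutoffProfile

theorem f_properties_general
    (σ₀ : ℝ)
    (κ : ℝ → ℝ) (hκc : ContinuousOn κ (Set.Ici 0))
    (R₁ : ℝ)
    (φ : ℝ → ℝ)
    (hφ : ∀ r, φ r = Real.exp (-(1 / (2 * σ₀ ^ 2)) * ∫ s in (0:ℝ)..r, s * max 0 (-κ s)))
    (Φ : ℝ → ℝ) (hΦ : ∀ r, Φ r = ∫ s in (0:ℝ)..r, φ s)
    (l : ℝ) (hl : l = (∫ s in (0:ℝ)..R₁, Φ s / φ s)⁻¹)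
    (g : ℝ → ℝ) (hg : ∀ r, g r = 1 - l / 2 * ∫ s in (0:ℝ)..(min r R₁), Φ s / φ s)
    (f : ℝ → ℝ) (hf : ∀ r, f r = ∫ s in (0:ℝ)..r, φ s * g s) :
    f 0 = 0 ∧
    StrictMonoOn f (Set.Ici 0) ∧
    (∀ r > (0:ℝ), 0 < f r) ∧
    ConcaveOn ℝ (Set.Ici 0) f := by
  obtain rfl : f = fun r => ∫ s in (0:ℝ)..r, (φ * g) s := funext hf
  set J : ℝ → ℝ := fun t => ∫ s in (0:ℝ)..t, Φ s / φ s
  obtain rfl : g = cutoffProfile J R₁ := funext fun r => by rw [hg, hl, cutoffProfile]; ring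
  have hφ_pos : ∀ r, 0 < φ r := fun r => (hφ r).symm ▸ Real.exp_pos _
  have hw : ContinuousOn (fun s => s * max 0 (-κ s)) (Ici 0) :=
    continuousOn_id.mul (continuousOn_const.sup hκc.neg)
  have hφ_cont : ContinuousOn φ (Ici 0) := by
    rw [funext hφ]; exact (continuousOn_const.mul hw.continuousOn_primitive_Ici).rexp
  have hφ_anti : AntitoneOn φ (Ici 0) := by
    rw [funext hφ]
    exact antitoneOn_exp_neg_mul_primitive hw (fun s hs => mul_nonneg hs (le_max_left _ _))
      (by positivity)
  have hq_cont : ContinuousOn (fun s => Φ s / φ s) (Ici 0) := by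
    rw [funext hΦ]; exact hφ_cont.continuousOn_primitive_Ici.div hφ_cont fun s _ => (hφ_pos s).ne'
  have hJ_mono : MonotoneOn J (Ici 0) := hq_cont.monotoneOn_primitive fun s hs =>
    div_nonneg ((hΦ s).symm ▸ intervalIntegral.integral_nonneg hs fun u _ => (hφ_pos u).le)
      (hφ_pos s).le
  have hJ0 : J 0 = 0 := intervalIntegral.integral_same
  have hg_pos : ∀ r ∈ Ici (0:ℝ), 0 < cutoffProfile J R₁ r := fun r hr =>
    one_half_pos.trans_le (one_half_le_cutoffProfile hJ_mono hJ0 hr)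
  have hψ_cont : ContinuousOn (φ * cutoffProfile J R₁) (Ici 0) :=
    hφ_cont.mul (continuousOn_cutoffProfile hq_cont.continuousOn_primitive_Ici)
  have hf_mono := hψ_cont.strictMonoOn_primitive fun s hs => mul_pos (hφ_pos s) (hg_pos s hs)
  refine ⟨intervalIntegral.integral_same, hf_mono, fun r hr => ?_,
    hψ_cont.concaveOn_primitive (hφ_anti.mul (antitoneOn_cutoffProfile hJ_mono hJ0)
      (fun s _ => (hφ_pos s).le) fun s hs => (hg_pos s hs).le)⟩
  simpa using hf_mono self_mem_Ici hr.le hr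

/-- The function `f` satisfies `f(0) = 0`, is strictly increasing on `[0,∞)`, is positive
on `(0,∞)`, and is concave on `[0,∞)`. -/
theorem f_properties
    (σ₀ : ℝ) (hσ₀ : 0 < σ₀)
    (κ : ℝ → ℝ) (hκc : ContinuousOn κ (Set.Ici 0))
    (hκ : ∃ c > 0, ∀ᶠ r in Filter.atTop, c ≤ κ r)
    (R₀ : ℝ) (hR₀ : R₀ = sInf {s : ℝ | 0 ≤ s ∧ ∀ r ≥ s, 0 ≤ κ r})
    (R₁ : ℝ) (hR₁ : R₁ = sInf {s : ℝ | R₀ ≤ s ∧ ∀ r ≥ s, 4 * σ₀ ^ 2 ≤ s * (s - R₀) * κ r})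
    (φ : ℝ → ℝ)
    (hφ : ∀ r, φ r = Real.exp (-(1 / (2 * σ₀ ^ 2)) * ∫ s in (0:ℝ)..r, s * max 0 (-κ s)))
    (Φ : ℝ → ℝ) (hΦ : ∀ r, Φ r = ∫ s in (0:ℝ)..r, φ s)
    (l : ℝ) (hl : l = (∫ s in (0:ℝ)..R₁, Φ s / φ s)⁻¹)
    (g : ℝ → ℝ) (hg : ∀ r, g r = 1 - l / 2 * ∫ s in (0:ℝ)..(min r R₁), Φ s / φ s)
    (f : ℝ → ℝ) (hf : ∀ r, f r = ∫ s in (0:ℝ)..r, φ s * g s) :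
    f 0 = 0 ∧
    StrictMonoOn f (Set.Ici 0) ∧
    (∀ r > (0:ℝ), 0 < f r) ∧
    ConcaveOn ℝ (Set.Ici 0) f :=
  f_properties_general σ₀ κ hκc R₁ φ hφ Φ hΦ l hl g hg f hf
end

section
/- For every r ≥ 0 one has φ(R₀)·r/2 ≤ f(r) ≤ r. -/
open Filter Set

/-- For every `r ≥ 0`, `φ(R₀)·r/2 ≤ f(r) ≤ r`. -/
theorem f_equivalent_to_identity
    (σ₀ : ℝ) (hσ₀ : 0 < σ₀)
    (κ : ℝ → ℝ) (hκc : ContinuousOn κ (Set.Ici 0))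
    (hκ : ∃ c > 0, ∀ᶠ r in Filter.atTop, c ≤ κ r)
    (R₀ : ℝ) (hR₀ : R₀ = sInf {s : ℝ | 0 ≤ s ∧ ∀ r ≥ s, 0 ≤ κ r})
    (R₁ : ℝ) (hR₁ : R₁ = sInf {s : ℝ | R₀ ≤ s ∧ ∀ r ≥ s, 4 * σ₀ ^ 2 ≤ s * (s - R₀) * κ r})
    (φ : ℝ → ℝ)
    (hφ : ∀ r, φ r = Real.exp (-(1 / (2 * σ₀ ^ 2)) * ∫ s in (0:ℝ)..r, s * max 0 (-κ s)))
    (Φ : ℝ → ℝ) (hΦ : ∀ r, Φ r = ∫ s in (0:ℝ)..r, φ s)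
    (l : ℝ) (hl : l = (∫ s in (0:ℝ)..R₁, Φ s / φ s)⁻¹)
    (g : ℝ → ℝ) (hg : ∀ r, g r = 1 - l / 2 * ∫ s in (0:ℝ)..(min r R₁), Φ s / φ s)
    (f : ℝ → ℝ) (hf : ∀ r, f r = ∫ s in (0:ℝ)..r, φ s * g s) :
    ∀ r ≥ (0:ℝ), φ R₀ * r / 2 ≤ f r ∧ f r ≤ r := by
  obtain ⟨c, hc, hev⟩ := hκ
  rw [Filter.eventually_atTop] at hev
  obtain ⟨s₀, hs₀⟩ := hev
  set u : ℝ → ℝ := fun s => s * max 0 (-κ s) with hu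
  have hucont : ContinuousOn u (Ici 0) :=
    continuousOn_id.mul (continuousOn_const.sup hκc.neg)
  have hsub : ∀ {a b : ℝ}, 0 ≤ a → 0 ≤ b → uIcc a b ⊆ Ici 0 := by
    intro a b ha hb x hx
    exact le_trans (le_min ha hb) hx.1
  have huint : ∀ {a b : ℝ}, 0 ≤ a → 0 ≤ b → IntervalIntegrable u MeasureTheory.volume a b :=
    fun ha hb => (hucont.mono (hsub ha hb)).intervalIntegrable
  have hunonneg : ∀ x, 0 ≤ x → 0 ≤ u x := by
    intro x hx
    exact mul_nonneg hx (le_max_left _ _)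
  set F : ℝ → ℝ := fun r => ∫ s in (0:ℝ)..r, u s with hF
  have hFmono : ∀ a b : ℝ, 0 ≤ a → a ≤ b → F a ≤ F b := by
    intro a b ha hab
    have h1 : F a + (∫ s in a..b, u s) = F b :=
      intervalIntegral.integral_add_adjacent_intervals (huint le_rfl ha) (huint ha (ha.trans hab))
    have h2 : 0 ≤ ∫ s in a..b, u s :=
      intervalIntegral.integral_nonneg hab (fun x hx => hunonneg x (ha.trans hx.1))
    linarith
  have hφpos : ∀ r, 0 < φ r := by intro r; rw [hφ]; exact Real.exp_pos _
  have hcpos : 0 < 1 / (2 * σ₀ ^ 2) := by positivity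
  have hφmono : ∀ a b : ℝ, 0 ≤ a → a ≤ b → φ b ≤ φ a := by
    intro a b ha hab
    rw [hφ, hφ]
    apply Real.exp_le_exp.mpr
    exact mul_le_mul_of_nonpos_left (hFmono a b ha hab) (neg_nonpos.mpr hcpos.le)
  have hF0 : F 0 = 0 := intervalIntegral.integral_same
  have hφ1 : ∀ r, 0 ≤ r → φ r ≤ 1 := by
    intro r hr
    have := hφmono 0 r le_rfl hr
    rw [hφ 0] at this
    simpa [← hF, hF0] using this
  -- R₀ facts
  set S : Set ℝ := {s : ℝ | 0 ≤ s ∧ ∀ r ≥ s, 0 ≤ κ r} with hS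
  have hSne : S.Nonempty :=
    ⟨max s₀ 0, le_max_right _ _, fun r hr =>
      le_of_lt (lt_of_lt_of_le hc (hs₀ r (le_trans (le_max_left _ _) hr)))⟩
  have hSbdd : BddBelow S := ⟨0, fun s hs => hs.1⟩
  have hR₀0 : 0 ≤ R₀ := by rw [hR₀]; exact le_csInf hSne (fun s hs => hs.1)
  have hκR₀ : ∀ r, R₀ < r → 0 ≤ κ r := by
    intro r hrR
    obtain ⟨s, hsS, hsr⟩ := exists_lt_of_csInf_lt hSne (by rw [← hR₀]; exact hrR)
    exact hsS.2 r hsr.le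
  have hφconst : ∀ a, R₀ ≤ a → φ a = φ R₀ := by
    intro a ha
    have hz : (∫ s in R₀..a, u s) = 0 := by
      rw [show (0:ℝ) = ∫ s in R₀..a, (0:ℝ) by simp]
      apply intervalIntegral.integral_congr_ae
      filter_upwards with x hx
      rw [Set.uIoc_of_le ha] at hx
      have h1 : 0 ≤ κ x := hκR₀ x hx.1
      have : max 0 (-κ x) = 0 := max_eq_left (by linarith)
      simp [hu, this]
    have h1 : F R₀ + (∫ s in R₀..a, u s) = F a :=
      intervalIntegral.integral_add_adjacent_intervals (huint le_rfl hR₀0)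
        (huint hR₀0 (hR₀0.trans ha))
    rw [hz, add_zero] at h1
    rw [hφ a, hφ R₀]
    exact congrArg Real.exp (congrArg (fun z => -(1 / (2 * σ₀ ^ 2)) * z) h1.symm)
  have hφge : ∀ s, 0 ≤ s → φ R₀ ≤ φ s := by
    intro s hs
    rcases le_total s R₀ with h | h
    · exact hφmono s R₀ hs h
    · rw [hφconst s h]
  have hφR₀pos : 0 < φ R₀ := hφpos R₀
  have hφR₀le1 : φ R₀ ≤ 1 := hφ1 R₀ hR₀0
  -- R₁ facts
  set T : Set ℝ := {s : ℝ | R₀ ≤ s ∧ ∀ r ≥ s, 4 * σ₀ ^ 2 ≤ s * (s - R₀) * κ r} with hT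
  have hTne : T.Nonempty := by
    have hX : (0:ℝ) ≤ 4 * σ₀ ^ 2 / c := by positivity
    refine ⟨max s₀ (R₀ + 1 + 4 * σ₀ ^ 2 / c), ?_, ?_⟩
    · have : R₀ ≤ R₀ + 1 + 4 * σ₀ ^ 2 / c := by linarith
      exact this.trans (le_max_right _ _)
    · intro r hr
      set s₁ := max s₀ (R₀ + 1 + 4 * σ₀ ^ 2 / c) with hs₁
      have h1 : R₀ + 1 + 4 * σ₀ ^ 2 / c ≤ s₁ := le_max_right _ _
      have h2 : c ≤ κ r := hs₀ r (le_trans (le_max_left _ _) hr)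
      have hX : (0:ℝ) ≤ 4 * σ₀ ^ 2 / c := by positivity
      have h3 : 4 * σ₀ ^ 2 / c ≤ s₁ := by linarith
      have h4 : 4 * σ₀ ^ 2 ≤ s₁ * c := by
        rw [div_le_iff₀ hc] at h3; linarith
      have h5 : 1 ≤ s₁ - R₀ := by linarith
      have h6 : 0 ≤ s₁ := by linarith
      calc 4 * σ₀ ^ 2 ≤ s₁ * c := h4
        _ ≤ s₁ * κ r := mul_le_mul_of_nonneg_left h2 h6
        _ = s₁ * 1 * κ r := by ring
        _ ≤ s₁ * (s₁ - R₀) * κ r :=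
            mul_le_mul_of_nonneg_right (mul_le_mul_of_nonneg_left h5 h6)
              (le_trans hc.le h2)
  have hTbdd : BddBelow T := ⟨R₀, fun s hs => hs.1⟩
  have hR₁R₀ : R₀ ≤ R₁ := by rw [hR₁]; exact le_csInf hTne (fun s hs => hs.1)
  have hR₁pos : 0 < R₁ := by
    by_contra h
    push_neg at h
    have hR₀eq : R₀ = 0 := le_antisymm (hR₁R₀.trans h) hR₀0
    have hκ1 : κ 1 ≤ |κ 1| := le_abs_self _
    have habs : (0:ℝ) < |κ 1| + 1 := by positivity
    set ε : ℝ := min 1 (4 * σ₀ ^ 2 / (|κ 1| + 1)) with hε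
    have hεpos : 0 < ε := lt_min one_pos (by positivity)
    obtain ⟨s, hsT, hsε⟩ := exists_lt_of_csInf_lt hTne
      (show sInf T < ε by rw [← hR₁]; linarith)
    have hs0 : 0 ≤ s := hR₀eq ▸ hsT.1
    have hs1 : s < 1 := lt_of_lt_of_le hsε (min_le_left _ _)
    have hs2 : s < 4 * σ₀ ^ 2 / (|κ 1| + 1) := lt_of_lt_of_le hsε (min_le_right _ _)
    have hs3 : s * (|κ 1| + 1) < 4 * σ₀ ^ 2 := by
      rw [lt_div_iff₀ habs] at hs2; linarith
    have hs4 : 4 * σ₀ ^ 2 ≤ s * (s - R₀) * κ 1 := hsT.2 1 hs1.le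
    rw [hR₀eq] at hs4
    linarith [mul_le_mul_of_nonneg_left hκ1 (mul_nonneg hs0 hs0),
      mul_le_mul_of_nonneg_left hs1.le (mul_nonneg hs0 (abs_nonneg (κ 1))), hs0]
  -- fix r, set up continuity on [0, M]
  intro r hr
  set M : ℝ := max r R₁ with hM
  have hM0 : 0 ≤ M := hr.trans (le_max_left _ _)
  have hrM : r ≤ M := le_max_left _ _
  have hR₁M : R₁ ≤ M := le_max_right _ _
  have hIccsub : Icc (0:ℝ) M ⊆ Ici 0 := fun x hx => hx.1
  have huicc : uIcc (0:ℝ) M = Icc 0 M := uIcc_of_le hM0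
  have hFcont : ContinuousOn F (Icc 0 M) := by
    rw [← huicc]
    exact intervalIntegral.continuousOn_primitive_interval
      ((hucont.mono (by rw [huicc]; exact hIccsub)).integrableOn_compact (by rw [huicc]; exact isCompact_Icc))
  have hφcont : ContinuousOn φ (Icc 0 M) := by
    apply ContinuousOn.congr (f := fun x => Real.exp (-(1 / (2 * σ₀ ^ 2)) * F x))
    · exact Real.continuous_exp.comp_continuousOn (continuousOn_const.mul hFcont)
    · intro x _; rw [hφ x]
  have hφint : ∀ {a b : ℝ}, a ∈ Icc (0:ℝ) M → b ∈ Icc (0:ℝ) M →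
      IntervalIntegrable φ MeasureTheory.volume a b := by
    intro a b ha hb
    apply (hφcont.mono _).intervalIntegrable
    intro x hx
    exact ⟨le_trans (le_min ha.1 hb.1) hx.1, le_trans hx.2 (max_le ha.2 hb.2)⟩
  have hΦcont : ContinuousOn Φ (Icc 0 M) := by
    apply ContinuousOn.congr (f := fun x => ∫ s in (0:ℝ)..x, φ s)
    · rw [← huicc]
      exact intervalIntegral.continuousOn_primitive_interval
        ((hφcont.mono (by rw [huicc])).integrableOn_compact (by rw [huicc]; exact isCompact_Icc))
    · intro x _; rw [hΦ x]
  -- lower bound on Φ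
  have hΦlb : ∀ s, s ∈ Icc (0:ℝ) M → φ R₀ * s ≤ Φ s := by
    intro s hs
    rw [hΦ]
    have h1 : (∫ x in (0:ℝ)..s, φ R₀) ≤ ∫ x in (0:ℝ)..s, φ x := by
      apply intervalIntegral.integral_mono_on hs.1 intervalIntegrable_const
        (hφint (left_mem_Icc.mpr hM0) hs)
      intro x hx
      exact hφge x hx.1
    rw [intervalIntegral.integral_const, smul_eq_mul, sub_zero, mul_comm] at h1
    exact h1
  have hΦnonneg : ∀ s, s ∈ Icc (0:ℝ) M → 0 ≤ Φ s := by
    intro s hs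
    have := hΦlb s hs
    nlinarith [hs.1]
  set w : ℝ → ℝ := fun s => Φ s / φ s with hw
  have hwcont : ContinuousOn w (Icc 0 M) :=
    hΦcont.div hφcont (fun x _ => (hφpos x).ne')
  have hwint : ∀ {a b : ℝ}, a ∈ Icc (0:ℝ) M → b ∈ Icc (0:ℝ) M →
      IntervalIntegrable w MeasureTheory.volume a b := by
    intro a b ha hb
    apply (hwcont.mono _).intervalIntegrable
    intro x hx
    exact ⟨le_trans (le_min ha.1 hb.1) hx.1, le_trans hx.2 (max_le ha.2 hb.2)⟩
  have hwnonneg : ∀ s, s ∈ Icc (0:ℝ) M → 0 ≤ w s := by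
    intro s hs
    exact div_nonneg (hΦnonneg s hs) (hφpos s).le
  have hwlb : ∀ s, s ∈ Icc (0:ℝ) M → φ R₀ * s ≤ w s := by
    intro s hs
    have h1 : φ R₀ * s ≤ Φ s := hΦlb s hs
    have h2 : Φ s ≤ Φ s / φ s := by
      rw [le_div_iff₀ (hφpos s)]
      exact mul_le_of_le_one_right (hΦnonneg s hs) (hφ1 s hs.1)
    exact h1.trans h2
  have hR₁mem : R₁ ∈ Icc (0:ℝ) M := ⟨hR₁pos.le, hR₁M⟩
  have h0mem : (0:ℝ) ∈ Icc (0:ℝ) M := left_mem_Icc.mpr hM0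
  -- the normalization integral is positive
  have hIpos : 0 < ∫ s in (0:ℝ)..R₁, Φ s / φ s := by
    have h1 : (∫ x in (0:ℝ)..R₁, φ R₀ * x) ≤ ∫ x in (0:ℝ)..R₁, w x := by
      apply intervalIntegral.integral_mono_on hR₁pos.le
        ((continuous_const.mul continuous_id).intervalIntegrable _ _) (hwint h0mem hR₁mem)
      intro x hx
      exact hwlb x ⟨hx.1, hx.2.trans hR₁M⟩
    have h2 : (∫ x in (0:ℝ)..R₁, φ R₀ * x) = φ R₀ * (R₁ ^ 2 / 2) := by
      rw [intervalIntegral.integral_const_mul, integral_id]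
      ring
    have h3 : 0 < φ R₀ * (R₁ ^ 2 / 2) := by positivity
    calc (0:ℝ) < φ R₀ * (R₁ ^ 2 / 2) := h3
      _ ≤ ∫ x in (0:ℝ)..R₁, w x := by rw [← h2]; exact h1
      _ = ∫ s in (0:ℝ)..R₁, Φ s / φ s := rfl
  have hlpos : 0 < l := by rw [hl]; exact inv_pos.mpr hIpos
  have hlmul : l * (∫ s in (0:ℝ)..R₁, Φ s / φ s) = 1 := by
    rw [hl]; exact inv_mul_cancel₀ hIpos.ne'
  -- bounds on G x = ∫₀^x w  for x ∈ [0, R₁]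
  have hGbounds : ∀ x, x ∈ Icc (0:ℝ) R₁ →
      0 ≤ (∫ s in (0:ℝ)..x, Φ s / φ s) ∧
      (∫ s in (0:ℝ)..x, Φ s / φ s) ≤ ∫ s in (0:ℝ)..R₁, Φ s / φ s := by
    intro x hx
    have hxM : x ∈ Icc (0:ℝ) M := ⟨hx.1, hx.2.trans hR₁M⟩
    constructor
    · exact intervalIntegral.integral_nonneg hx.1
        (fun s hs => hwnonneg s ⟨hs.1, hs.2.trans hxM.2⟩)
    · have hadd : (∫ s in (0:ℝ)..x, w s) + (∫ s in x..R₁, w s) = ∫ s in (0:ℝ)..R₁, w s :=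
        intervalIntegral.integral_add_adjacent_intervals (hwint h0mem hxM) (hwint hxM hR₁mem)
      have hnn : 0 ≤ ∫ s in x..R₁, w s :=
        intervalIntegral.integral_nonneg hx.2
          (fun s hs => hwnonneg s ⟨hx.1.trans hs.1, hs.2.trans hR₁M⟩)
      have : (∫ s in (0:ℝ)..x, w s) ≤ ∫ s in (0:ℝ)..R₁, w s := by linarith
      exact this
  -- bounds on g
  have hgbounds : ∀ x, 0 ≤ x → 1 / 2 ≤ g x ∧ g x ≤ 1 := by
    intro x hx
    have hmmem : min x R₁ ∈ Icc (0:ℝ) R₁ := ⟨le_min hx hR₁pos.le, min_le_right _ _⟩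
    obtain ⟨hG0, hG1⟩ := hGbounds (min x R₁) hmmem
    rw [hg]
    constructor
    · have : l / 2 * (∫ s in (0:ℝ)..(min x R₁), Φ s / φ s) ≤ 1 / 2 := by
        have h1 : l / 2 * (∫ s in (0:ℝ)..(min x R₁), Φ s / φ s)
            ≤ l / 2 * (∫ s in (0:ℝ)..R₁, Φ s / φ s) := by
          apply mul_le_mul_of_nonneg_left hG1 (by linarith)
        have h2 : l / 2 * (∫ s in (0:ℝ)..R₁, Φ s / φ s) = 1 / 2 := by
          rw [div_mul_eq_mul_div, hlmul]
        linarith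
      linarith
    · have : 0 ≤ l / 2 * (∫ s in (0:ℝ)..(min x R₁), Φ s / φ s) :=
        mul_nonneg (by linarith) hG0
      linarith
  -- continuity of g, then of φ * g
  have hgcont : ContinuousOn g (Icc 0 M) := by
    have hGR₁cont : ContinuousOn (fun x => ∫ s in (0:ℝ)..x, Φ s / φ s) (Icc 0 M) := by
      rw [← huicc]
      exact intervalIntegral.continuousOn_primitive_interval
        ((hwcont.mono (by rw [huicc])).integrableOn_compact (by rw [huicc]; exact isCompact_Icc))
    apply ContinuousOn.congr
      (f := fun x => 1 - l / 2 * ∫ s in (0:ℝ)..(min x R₁), Φ s / φ s)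
    · apply continuousOn_const.sub
      apply continuousOn_const.mul
      apply hGR₁cont.comp (Continuous.continuousOn (continuous_id.min continuous_const))
      intro x hx
      exact ⟨le_min hx.1 hR₁pos.le, (min_le_right _ _).trans hR₁M⟩
    · intro x _; rw [hg x]
  have hfgcont : ContinuousOn (fun s => φ s * g s) (Icc 0 M) := hφcont.mul hgcont
  have hfgint : IntervalIntegrable (fun s => φ s * g s) MeasureTheory.volume 0 r := by
    apply (hfgcont.mono _).intervalIntegrable
    intro x hx
    exact ⟨le_trans (le_min le_rfl hr) hx.1, le_trans hx.2 (max_le hM0 hrM)⟩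
  constructor
  · -- lower bound
    rw [hf]
    have h1 : (∫ s in (0:ℝ)..r, φ R₀ * (1/2)) ≤ ∫ s in (0:ℝ)..r, φ s * g s := by
      apply intervalIntegral.integral_mono_on hr intervalIntegrable_const hfgint
      intro x hx
      obtain ⟨hg1, _⟩ := hgbounds x hx.1
      exact mul_le_mul (hφge x hx.1) hg1 (by norm_num) (hφpos x).le
    rw [intervalIntegral.integral_const, smul_eq_mul, sub_zero] at h1
    linarith
  · -- upper bound
    rw [hf]
    have h1 : (∫ s in (0:ℝ)..r, φ s * g s) ≤ ∫ s in (0:ℝ)..r, (1:ℝ) := by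
      apply intervalIntegral.integral_mono_on hr hfgint intervalIntegrable_const
      intro x hx
      obtain ⟨hg1, hg2⟩ := hgbounds x hx.1
      calc φ x * g x ≤ 1 * g x :=
            mul_le_mul_of_nonneg_right (hφ1 x hx.1) (by linarith)
        _ = g x := one_mul _
        _ ≤ 1 := hg2
    rw [intervalIntegral.integral_const, smul_eq_mul, sub_zero, mul_one] at h1
    exact h1
end

section
/- The function d_f(x,y) = f(‖x−y‖) defines a metric on ℝ^d (it is symmetric, vanishes exactly on the diagonal, and satisfies the triangle inequality), and it is equivalent to the Euclidean distance: (φ(R₀)/2)·‖x−y‖ ≤ f(‖x−y‖) ≤ ‖x−y‖ for all x, y ∈ ℝ^d. -/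
open Filter Set MeasureTheory

private lemma aux_uIcc_subset {a b : ℝ} (ha : 0 ≤ a) (hb : 0 ≤ b) :
    Set.uIcc a b ⊆ Set.Ici 0 := fun u hu => le_trans (le_min ha hb) hu.1

private lemma aux_intervalIntegrable {F : ℝ → ℝ} (hF : ContinuousOn F (Set.Ici 0))
    {a b : ℝ} (ha : 0 ≤ a) (hb : 0 ≤ b) :
    IntervalIntegrable F MeasureTheory.volume a b :=
  (hF.mono (aux_uIcc_subset ha hb)).intervalIntegrable

private lemma aux_primitive_cont {F : ℝ → ℝ} (hF : ContinuousOn F (Set.Ici 0)) :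
    ContinuousOn (fun r => ∫ s in (0:ℝ)..r, F s) (Set.Ici 0) := by
  intro x hx
  have hx1 : x < x + 1 := lt_add_one x
  have h01 : (0:ℝ) ≤ x + 1 := le_trans hx hx1.le
  have hInt : MeasureTheory.IntegrableOn F (Set.uIcc 0 (x+1)) MeasureTheory.volume := by
    rw [Set.uIcc_of_le h01]
    exact (hF.mono Set.Icc_subset_Ici_self).integrableOn_Icc
  have h2 := intervalIntegral.continuousOn_primitive_interval hInt x
    (by rw [Set.uIcc_of_le h01]; exact ⟨hx, hx1.le⟩)
  rw [Set.uIcc_of_le h01, ← Set.Ici_inter_Iic] at h2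
  exact (continuousWithinAt_inter (Iic_mem_nhds hx1)).mp h2

private lemma aux_split {F : ℝ → ℝ} (hF : ContinuousOn F (Set.Ici 0)) {a b : ℝ}
    (ha : 0 ≤ a) (hb : 0 ≤ b) :
    (∫ s in (0:ℝ)..b, F s) = (∫ s in (0:ℝ)..a, F s) + ∫ s in a..b, F s :=
  (intervalIntegral.integral_add_adjacent_intervals
    (aux_intervalIntegrable hF le_rfl ha) (aux_intervalIntegrable hF ha hb)).symm

private lemma aux_primitive_mono {F : ℝ → ℝ} (hF : ContinuousOn F (Set.Ici 0))
    (hpos : ∀ s, 0 ≤ s → 0 ≤ F s) {a b : ℝ} (ha : 0 ≤ a) (hab : a ≤ b) :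
    (∫ s in (0:ℝ)..a, F s) ≤ ∫ s in (0:ℝ)..b, F s := by
  rw [aux_split hF ha (ha.trans hab)]
  have h0 : 0 ≤ ∫ s in a..b, F s :=
    intervalIntegral.integral_nonneg hab (fun u hu => hpos u (ha.trans hu.1))
  linarith

set_option maxHeartbeats 2000000 in
/-- `d_f(x,y) = f(‖x-y‖)` is a metric on `ℝ^d`, equivalent to the Euclidean distance:
`(φ(R₀)/2)·‖x-y‖ ≤ f(‖x-y‖) ≤ ‖x-y‖`. -/
theorem f_dist_is_metric
    (d : ℕ) (hd : 1 ≤ d)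
    (σ₀ : ℝ) (hσ₀ : 0 < σ₀)
    (κ : ℝ → ℝ) (hκc : ContinuousOn κ (Set.Ici 0))
    (hκ : ∃ c > 0, ∀ᶠ r in Filter.atTop, c ≤ κ r)
    (R₀ : ℝ) (hR₀ : R₀ = sInf {s : ℝ | 0 ≤ s ∧ ∀ r ≥ s, 0 ≤ κ r})
    (R₁ : ℝ) (hR₁ : R₁ = sInf {s : ℝ | R₀ ≤ s ∧ ∀ r ≥ s, 4 * σ₀ ^ 2 ≤ s * (s - R₀) * κ r})
    (φ : ℝ → ℝ)
    (hφ : ∀ r, φ r = Real.exp (-(1 / (2 * σ₀ ^ 2)) * ∫ s in (0:ℝ)..r, s * max 0 (-κ s)))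
    (Φ : ℝ → ℝ) (hΦ : ∀ r, Φ r = ∫ s in (0:ℝ)..r, φ s)
    (l : ℝ) (hl : l = (∫ s in (0:ℝ)..R₁, Φ s / φ s)⁻¹)
    (g : ℝ → ℝ) (hg : ∀ r, g r = 1 - l / 2 * ∫ s in (0:ℝ)..(min r R₁), Φ s / φ s)
    (f : ℝ → ℝ) (hf : ∀ r, f r = ∫ s in (0:ℝ)..r, φ s * g s) :
    (∀ x y : EuclideanSpace ℝ (Fin d), f ‖x - y‖ = f ‖y - x‖) ∧
    (∀ x y : EuclideanSpace ℝ (Fin d), f ‖x - y‖ = 0 ↔ x = y) ∧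
    (∀ x y z : EuclideanSpace ℝ (Fin d), f ‖x - z‖ ≤ f ‖x - y‖ + f ‖y - z‖) ∧
    (∀ x y : EuclideanSpace ℝ (Fin d),
      φ R₀ / 2 * ‖x - y‖ ≤ f ‖x - y‖ ∧ f ‖x - y‖ ≤ ‖x - y‖) := by
  obtain ⟨c₀, hc₀, hev⟩ := hκ
  rw [Filter.eventually_atTop] at hev
  obtain ⟨N, hN⟩ := hev
  -- the integrand of the exponent
  set h : ℝ → ℝ := fun s => s * max 0 (-κ s) with hh
  have hhcont : ContinuousOn h (Set.Ici 0) :=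
    continuousOn_id.mul (continuousOn_const.sup hκc.neg)
  have hhnn : ∀ s, 0 ≤ s → 0 ≤ h s := fun s hs => mul_nonneg hs (le_max_left 0 _)
  -- R₀ facts
  have hS₀ne : {s : ℝ | 0 ≤ s ∧ ∀ r ≥ s, 0 ≤ κ r}.Nonempty := by
    refine ⟨max 0 N, le_max_left 0 N, fun r hr => ?_⟩
    exact le_trans hc₀.le (hN r (le_trans (le_max_right 0 N) hr))
  have hR₀0 : 0 ≤ R₀ := by
    rw [hR₀]; exact le_csInf hS₀ne (fun s hs => hs.1)
  have hκnn' : ∀ r, R₀ < r → 0 ≤ κ r := by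
    intro r hr
    rw [hR₀] at hr
    obtain ⟨s, hs, hsr⟩ := exists_lt_of_csInf_lt hS₀ne hr
    exact hs.2 r hsr.le
  have hκnn : ∀ r, R₀ ≤ r → 0 ≤ κ r := by
    intro r hr
    rcases eq_or_lt_of_le hr with heq | hlt
    · have hconW : ContinuousWithinAt κ (Set.Ioi R₀) R₀ :=
        (hκc R₀ hR₀0).mono (fun u hu => hR₀0.trans (le_of_lt hu))
      have h0 : (0:ℝ) ≤ κ R₀ := ge_of_tendsto hconW
        (Filter.eventually_of_mem self_mem_nhdsWithin (fun u hu => hκnn' u hu))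
      rwa [heq] at h0
    · exact hκnn' r hlt
  -- φ facts
  have hφpos : ∀ r, 0 < φ r := fun r => by rw [hφ r]; exact Real.exp_pos _
  have hHnn : ∀ r, 0 ≤ r → 0 ≤ ∫ s in (0:ℝ)..r, h s := fun r hr =>
    intervalIntegral.integral_nonneg hr (fun u hu => hhnn u hu.1)
  have hcpos : (0:ℝ) < 1 / (2 * σ₀ ^ 2) := by positivity
  have hφle1 : ∀ r, 0 ≤ r → φ r ≤ 1 := by
    intro r hr
    rw [hφ r]
    rw [Real.exp_le_one_iff]
    have := hHnn r hr
    nlinarith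
  have hφanti : ∀ a b, 0 ≤ a → a ≤ b → φ b ≤ φ a := by
    intro a b ha hab
    rw [hφ a, hφ b, Real.exp_le_exp]
    have hH := aux_primitive_mono hhcont hhnn ha hab
    nlinarith
  have hφR₀ : ∀ r, R₀ ≤ r → φ r = φ R₀ := by
    intro r hr
    rw [hφ r, hφ R₀]
    congr 1
    have hz : (∫ s in R₀..r, h s) = 0 := by
      rw [intervalIntegral.integral_congr (g := fun _ => (0:ℝ)) ?_,
        intervalIntegral.integral_zero]
      intro u hu
      rw [Set.uIcc_of_le hr] at hu
      have : max 0 (-κ u) = 0 := max_eq_left (neg_nonpos.mpr (hκnn u hu.1))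
      simp only [hh, this, mul_zero]
    have hsplit := aux_split hhcont hR₀0 (hR₀0.trans hr)
    rw [hz] at hsplit
    rw [hsplit]; ring
  have hφlb : ∀ s, 0 ≤ s → φ R₀ ≤ φ s := by
    intro s hs
    rcases le_total s R₀ with hc | hc
    · exact hφanti s R₀ hs hc
    · exact (hφR₀ s hc).ge
  have hφcont : ContinuousOn φ (Set.Ici 0) := by
    rw [funext hφ]
    exact Real.continuous_exp.comp_continuousOn
      (continuousOn_const.mul (aux_primitive_cont hhcont))
  -- Φ and ψ = Φ/φ facts
  have hΦcont : ContinuousOn Φ (Set.Ici 0) := by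
    rw [funext hΦ]; exact aux_primitive_cont hφcont
  have hΦnn : ∀ r, 0 ≤ r → 0 ≤ Φ r := by
    intro r hr
    rw [hΦ r]
    exact intervalIntegral.integral_nonneg hr (fun u _ => (hφpos u).le)
  have hΦpos : ∀ r, 0 < r → 0 < Φ r := by
    intro r hr
    rw [hΦ r]
    exact intervalIntegral.intervalIntegral_pos_of_pos_on
      (aux_intervalIntegrable hφcont le_rfl hr.le) (fun u _ => hφpos u) hr
  set ψ : ℝ → ℝ := fun s => Φ s / φ s with hψ
  have hψcont : ContinuousOn ψ (Set.Ici 0) :=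
    hΦcont.div hφcont (fun s _ => (hφpos s).ne')
  have hψnn : ∀ s, 0 ≤ s → 0 ≤ ψ s := fun s hs => div_nonneg (hΦnn s hs) (hφpos s).le
  have hψpos : ∀ s, 0 < s → 0 < ψ s := fun s hs => div_pos (hΦpos s hs) (hφpos s)
  -- R₁ facts
  set S₁ := {s : ℝ | R₀ ≤ s ∧ ∀ r ≥ s, 4 * σ₀ ^ 2 ≤ s * (s - R₀) * κ r} with hS₁
  have hS₁ne : S₁.Nonempty := by
    set s₁ := max N (max (R₀ + 1) (4 * σ₀ ^ 2 / c₀)) with hs₁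
    have hs₁N : N ≤ s₁ := le_max_left _ _
    have hs₁R : R₀ + 1 ≤ s₁ := le_trans (le_max_left _ _) (le_max_right _ _)
    have hs₁d : 4 * σ₀ ^ 2 / c₀ ≤ s₁ := le_trans (le_max_right _ _) (le_max_right _ _)
    refine ⟨s₁, by linarith, fun r hr => ?_⟩
    have hκr : c₀ ≤ κ r := hN r (hs₁N.trans hr)
    have hd : 4 * σ₀ ^ 2 ≤ s₁ * c₀ := by
      rw [div_le_iff₀ hc₀] at hs₁d; linarith
    have h0s : (0:ℝ) ≤ s₁ := by linarith
    have h1 : s₁ * c₀ ≤ s₁ * (s₁ - R₀) * c₀ := by nlinarith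
    have h2 : s₁ * (s₁ - R₀) * c₀ ≤ s₁ * (s₁ - R₀) * κ r := by nlinarith
    linarith
  have hR₁R₀ : R₀ ≤ R₁ := by
    rw [hR₁]; exact le_csInf hS₁ne (fun s hs => hs.1)
  have hR₁pos : 0 < R₁ := by
    obtain ⟨z, hz, hmax⟩ := (isCompact_Icc (a := (0:ℝ)) (b := 1)).exists_isMaxOn
      ⟨0, le_rfl, zero_le_one⟩ (hκc.mono Set.Icc_subset_Ici_self)
    set C := max (κ z) 1 with hC
    have hCpos : (0:ℝ) < C := lt_of_lt_of_le one_pos (le_max_right _ _)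
    set δ := min 1 (4 * σ₀ ^ 2 / C) with hδ
    have hδpos : 0 < δ := lt_min one_pos (by positivity)
    have hbound : ∀ s ∈ S₁, δ ≤ s := by
      intro s hs
      obtain ⟨hsR₀, hsκ⟩ := hs
      have hs0 : 0 ≤ s := hR₀0.trans hsR₀
      rcases le_total 1 s with h1s | h1s
      · exact le_trans (min_le_left _ _) h1s
      · refine le_trans (min_le_right _ _) ?_
        have hκs := hsκ s le_rfl
        have hκsC : κ s ≤ C := le_trans (hmax ⟨hs0, h1s⟩) (le_max_left _ _)
        have hκs0 : 0 ≤ κ s := by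
          by_contra hneg
          push_neg at hneg
          have hsp : 0 ≤ s * (s - R₀) := mul_nonneg hs0 (by linarith)
          have : s * (s - R₀) * κ s ≤ 0 := mul_nonpos_of_nonneg_of_nonpos hsp hneg.le
          nlinarith
        rw [div_le_iff₀ hCpos]
        have e0 : 0 ≤ s * κ s := mul_nonneg hs0 hκs0
        have e1 : s * (s - R₀) * κ s ≤ s * s * κ s := by nlinarith
        have e2 : s * s * κ s ≤ s * κ s := by nlinarith
        have e3 : s * κ s ≤ s * C := mul_le_mul_of_nonneg_left hκsC hs0
        linarith
    rw [hR₁]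
    exact lt_of_lt_of_le hδpos (le_csInf hS₁ne hbound)
  -- l facts
  set I := ∫ s in (0:ℝ)..R₁, ψ s with hI
  have hIpos : 0 < I :=
    intervalIntegral.intervalIntegral_pos_of_pos_on
      (aux_intervalIntegrable hψcont le_rfl hR₁pos.le)
      (fun u hu => hψpos u hu.1) hR₁pos
  have hlI : l * I = 1 := by rw [hl]; exact inv_mul_cancel₀ hIpos.ne'
  have hlpos : 0 < l := by rw [hl]; exact inv_pos.mpr hIpos
  -- g facts
  have hGmono : ∀ a b, 0 ≤ a → a ≤ b →
      (∫ s in (0:ℝ)..(min a R₁), ψ s) ≤ ∫ s in (0:ℝ)..(min b R₁), ψ s :=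
    fun a b ha hab => aux_primitive_mono hψcont hψnn (le_min ha hR₁pos.le)
      (min_le_min hab le_rfl)
  have hgbound : ∀ r, 0 ≤ r → 1/2 ≤ g r ∧ g r ≤ 1 := by
    intro r hr
    have hm0 : 0 ≤ min r R₁ := le_min hr hR₁pos.le
    have hG0 : 0 ≤ ∫ s in (0:ℝ)..(min r R₁), ψ s :=
      intervalIntegral.integral_nonneg hm0 (fun u hu => hψnn u hu.1)
    have hGI : (∫ s in (0:ℝ)..(min r R₁), ψ s) ≤ I := by
      rw [hI]
      exact aux_primitive_mono hψcont hψnn hm0 (min_le_right r R₁)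
    rw [hg r]
    constructor
    · nlinarith
    · nlinarith
  have hganti : ∀ a b, 0 ≤ a → a ≤ b → g b ≤ g a := by
    intro a b ha hab
    rw [hg a, hg b]
    have := hGmono a b ha hab
    nlinarith
  have hgcont : ContinuousOn g (Set.Ici 0) := by
    rw [funext hg]
    refine continuousOn_const.sub (continuousOn_const.mul ?_)
    exact (aux_primitive_cont hψcont).comp
      ((continuous_id.min continuous_const).continuousOn)
      (fun x hx => le_min hx hR₁pos.le)
  -- the integrand φ*g
  set fg : ℝ → ℝ := fun s => φ s * g s with hfg
  have hfgcont : ContinuousOn fg (Set.Ici 0) := hφcont.mul hgcont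
  have hfglb : ∀ s, 0 ≤ s → φ R₀ / 2 ≤ fg s := by
    intro s hs
    have h1 := (hgbound s hs).1
    have h2 := hφlb s hs
    have h3 := hφpos s
    simp only [hfg]
    have h5 := mul_le_mul h2 h1 (by norm_num) h3.le
    linarith
  have hfgub : ∀ s, 0 ≤ s → fg s ≤ 1 := by
    intro s hs
    have h1 := (hgbound s hs).2
    have h2 := hφle1 s hs
    have h3 := (hgbound s hs).1
    have h4 := hφpos s
    simp only [hfg]
    have h5 := mul_le_mul h2 h1 (by linarith) (by norm_num : (0:ℝ) ≤ 1)
    linarith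
  have hfgnn : ∀ s, 0 ≤ s → 0 ≤ fg s := fun s hs =>
    le_trans (by have := hφpos R₀; positivity) (hfglb s hs)
  have hfganti : ∀ a b, 0 ≤ a → a ≤ b → fg b ≤ fg a := by
    intro a b ha hab
    have hb : 0 ≤ b := ha.trans hab
    exact mul_le_mul (hφanti a b ha hab) (hganti a b ha hab)
      (le_trans (by norm_num) (hgbound b hb).1) (hφpos a).le
  -- f facts
  have hfeq : ∀ r, f r = ∫ s in (0:ℝ)..r, fg s := hf
  have hf0 : f 0 = 0 := by rw [hfeq 0, intervalIntegral.integral_same]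
  have hflb : ∀ r, 0 ≤ r → φ R₀ / 2 * r ≤ f r := by
    intro r hr
    rw [hfeq r]
    have := intervalIntegral.integral_mono_on hr
      (intervalIntegrable_const (c := φ R₀ / 2))
      (aux_intervalIntegrable hfgcont le_rfl hr)
      (fun x hx => hfglb x hx.1)
    rw [intervalIntegral.integral_const] at this
    simpa [sub_zero, smul_eq_mul, mul_comm] using this
  have hfub : ∀ r, 0 ≤ r → f r ≤ r := by
    intro r hr
    rw [hfeq r]
    have := intervalIntegral.integral_mono_on hr
      (aux_intervalIntegrable hfgcont le_rfl hr)
      (intervalIntegrable_const (c := (1:ℝ)))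
      (fun x hx => hfgub x hx.1)
    rw [intervalIntegral.integral_const] at this
    simpa [sub_zero, smul_eq_mul] using this
  have hfmono : ∀ a b, 0 ≤ a → a ≤ b → f a ≤ f b := by
    intro a b ha hab
    rw [hfeq a, hfeq b, aux_split hfgcont ha (ha.trans hab)]
    have : 0 ≤ ∫ s in a..b, fg s :=
      intervalIntegral.integral_nonneg hab (fun u hu => hfgnn u (ha.trans hu.1))
    linarith
  have hfsub : ∀ A B, 0 ≤ A → 0 ≤ B → f (A + B) ≤ f A + f B := by
    intro A B hA hB
    have hAB : 0 ≤ A + B := by linarith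
    rw [hfeq (A + B), hfeq A, hfeq B, aux_split hfgcont hA hAB]
    have hcomp : ContinuousOn (fun t => fg (A + t)) (Set.Ici 0) :=
      hfgcont.comp (continuous_const.add continuous_id).continuousOn
        (fun t ht => add_nonneg hA ht)
    have hrw : (∫ s in A..(A + B), fg s) = ∫ t in (0:ℝ)..B, fg (A + t) := by
      rw [intervalIntegral.integral_comp_add_left fg A, add_zero]
    rw [hrw]
    have hle : (∫ t in (0:ℝ)..B, fg (A + t)) ≤ ∫ t in (0:ℝ)..B, fg t :=
      intervalIntegral.integral_mono_on hB
        (aux_intervalIntegrable hcomp le_rfl hB)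
        (aux_intervalIntegrable hfgcont le_rfl hB)
        (fun t ht => hfganti t (A + t) ht.1 (by linarith [ht.1]))
    linarith
  -- conclusion
  refine ⟨fun x y => by rw [norm_sub_rev], fun x y => ?_, fun x y z => ?_, fun x y => ?_⟩
  · constructor
    · intro h0
      have hn : 0 ≤ ‖x - y‖ := norm_nonneg _
      have hlow := hflb _ hn
      rw [h0] at hlow
      have hφR := hφpos R₀
      have : ‖x - y‖ ≤ 0 := by
        by_contra hpos
        push_neg at hpos
        have : 0 < φ R₀ / 2 * ‖x - y‖ := by positivity
        linarith
      have : ‖x - y‖ = 0 := le_antisymm this hn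
      exact sub_eq_zero.mp (norm_eq_zero.mp this)
    · intro hxy
      subst hxy
      rw [sub_self, norm_zero]
      exact hf0
  · have htri : ‖x - z‖ ≤ ‖x - y‖ + ‖y - z‖ := norm_sub_le_norm_sub_add_norm_sub x y z
    calc f ‖x - z‖ ≤ f (‖x - y‖ + ‖y - z‖) := hfmono _ _ (norm_nonneg _) htri
      _ ≤ f ‖x - y‖ + f ‖y - z‖ := hfsub _ _ (norm_nonneg _) (norm_nonneg _)
  · exact ⟨hflb _ (norm_nonneg _), hfub _ (norm_nonneg _)⟩
end

section
/- For every r > 0 with r ≠ R₁, the function f is twice differentiable at r and satisfies f''(r) − (1/(2σ₀²))·r·κ(r)·f'(r) ≤ −(ℓ/2)·f(r). -/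
open Filter Set Topology MeasureTheory intervalIntegral

set_option maxHeartbeats 1000000 in
/-- Contraction inequality: for every `r > 0` with `r ≠ R₁`, `f` is twice differentiable
at `r` and `f''(r) - (1/(2σ₀²))·r·κ(r)·f'(r) ≤ -(ℓ/2)·f(r)`. -/
theorem f_contraction_inequality
    (σ₀ : ℝ) (hσ₀ : 0 < σ₀)
    (κ : ℝ → ℝ) (hκc : ContinuousOn κ (Set.Ici 0))
    (hκ : ∃ c > 0, ∀ᶠ r in Filter.atTop, c ≤ κ r)
    (R₀ : ℝ) (hR₀ : R₀ = sInf {s : ℝ | 0 ≤ s ∧ ∀ r ≥ s, 0 ≤ κ r})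
    (R₁ : ℝ) (hR₁ : R₁ = sInf {s : ℝ | R₀ ≤ s ∧ ∀ r ≥ s, 4 * σ₀ ^ 2 ≤ s * (s - R₀) * κ r})
    (φ : ℝ → ℝ)
    (hφ : ∀ r, φ r = Real.exp (-(1 / (2 * σ₀ ^ 2)) * ∫ s in (0:ℝ)..r, s * max 0 (-κ s)))
    (Φ : ℝ → ℝ) (hΦ : ∀ r, Φ r = ∫ s in (0:ℝ)..r, φ s)
    (l : ℝ) (hl : l = (∫ s in (0:ℝ)..R₁, Φ s / φ s)⁻¹)
    (g : ℝ → ℝ) (hg : ∀ r, g r = 1 - l / 2 * ∫ s in (0:ℝ)..(min r R₁), Φ s / φ s)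
    (f : ℝ → ℝ) (hf : ∀ r, f r = ∫ s in (0:ℝ)..r, φ s * g s) :
    ∀ r > (0:ℝ), r ≠ R₁ →
      DifferentiableAt ℝ f r ∧ DifferentiableAt ℝ (deriv f) r ∧
      deriv (deriv f) r - 1 / (2 * σ₀ ^ 2) * r * κ r * deriv f r ≤ -(l / 2) * f r := by
  obtain ⟨c, hc, hev⟩ := hκ
  obtain ⟨N, hN⟩ := eventually_atTop.1 hev
  -- S facts
  set S := {s : ℝ | 0 ≤ s ∧ ∀ r ≥ s, 0 ≤ κ r} with hS
  have hSne : S.Nonempty := ⟨max N 0, le_max_right _ _, fun r hrr =>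
    le_of_lt (lt_of_lt_of_le hc (hN r (le_trans (le_max_left _ _) hrr)))⟩
  have hSbd : BddBelow S := ⟨0, fun s hs => hs.1⟩
  have hR₀0 : 0 ≤ R₀ := hR₀ ▸ le_csInf hSne fun s hs => hs.1
  have hκ0 : ∀ r, R₀ ≤ r → 0 ≤ κ r := by
    have hlt : ∀ r, R₀ < r → 0 ≤ κ r := by
      intro r hrr
      obtain ⟨s, hsS, hsr⟩ := (csInf_lt_iff hSbd hSne).1 (hR₀ ▸ hrr)
      exact hsS.2 r (le_of_lt hsr)
    intro r hrr
    rcases eq_or_lt_of_le hrr with h | h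
    · -- r = R₀ : continuity
      rw [← h]
      have hcw : ContinuousWithinAt κ (Ioi R₀) R₀ :=
        ((hκc.continuousWithinAt hR₀0).mono (fun x hx => le_trans hR₀0 (le_of_lt hx)))
      have hne : (𝓝[Ioi R₀] R₀).NeBot := nhdsGT_neBot R₀
      refine ge_of_tendsto hcw ?_
      filter_upwards [eventually_mem_nhdsWithin] with x hx
      exact hlt x hx
    · exact hlt r h
  -- T facts
  set T := {s : ℝ | R₀ ≤ s ∧ ∀ r ≥ s, 4 * σ₀ ^ 2 ≤ s * (s - R₀) * κ r} with hT
  have hTne : T.Nonempty := by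
    refine ⟨max N (R₀ + max 1 (4 * σ₀ ^ 2 / c)), ?_, ?_⟩
    · have : (1:ℝ) ≤ max 1 (4 * σ₀ ^ 2 / c) := le_max_left _ _
      have := le_max_right N (R₀ + max 1 (4 * σ₀ ^ 2 / c))
      nlinarith
    · intro r hrr
      set s := max N (R₀ + max 1 (4 * σ₀ ^ 2 / c)) with hs
      have h1 : (1:ℝ) ≤ max 1 (4 * σ₀ ^ 2 / c) := le_max_left _ _
      have h2 : 4 * σ₀ ^ 2 / c ≤ max 1 (4 * σ₀ ^ 2 / c) := le_max_right _ _
      have hsR₀ : R₀ + max 1 (4 * σ₀ ^ 2 / c) ≤ s := le_max_right _ _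
      have hκr : c ≤ κ r := hN r (le_trans (le_trans (le_max_left _ _) (le_refl s)) hrr)
      have hs1 : 1 ≤ s := by nlinarith
      have hsd : 4 * σ₀ ^ 2 / c ≤ s - R₀ := by nlinarith
      have hdiv : 4 * σ₀ ^ 2 = (4 * σ₀ ^ 2 / c) * c := by field_simp
      calc 4 * σ₀ ^ 2 = 1 * ((4 * σ₀ ^ 2 / c) * c) := by rw [← hdiv]; ring
        _ ≤ s * ((s - R₀) * κ r) := by
            have hcpos : (0:ℝ) < c := hc
            have h4c : 0 < 4 * σ₀ ^ 2 / c := by positivity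
            have : (4 * σ₀ ^ 2 / c) * c ≤ (s - R₀) * κ r :=
              mul_le_mul hsd hκr (le_of_lt hcpos) (by nlinarith)
            exact mul_le_mul hs1 this (by positivity) (by nlinarith)
        _ = s * (s - R₀) * κ r := by ring
  have hTbd : BddBelow T := ⟨R₀, fun s hs => hs.1⟩
  have hR₀R₁le : R₀ ≤ R₁ := hR₁ ▸ le_csInf hTne fun s hs => hs.1
  -- R₀ < R₁
  obtain ⟨M, hM⟩ := (isCompact_Icc (a := (0:ℝ)) (b := R₀ + 1)).exists_bound_of_continuousOn
      (hκc.mono (fun x hx => hx.1))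
  have hM1 : ∀ x ∈ Icc (0:ℝ) (R₀+1), κ x ≤ max M 1 := fun x hx =>
    le_trans (le_trans (le_abs_self _) (hM x hx)) (le_max_left _ _)
  have hMpos : (0:ℝ) < max M 1 := lt_of_lt_of_le one_pos (le_max_right _ _)
  have hR₀R₁ : R₀ < R₁ := by
    have hδ : ∀ s ∈ T, R₀ + min 1 (4 * σ₀ ^ 2 / ((R₀ + 1) * max M 1)) ≤ s := by
      intro s hs
      rcases le_or_gt (R₀ + 1) s with h | h
      · have : min 1 (4 * σ₀ ^ 2 / ((R₀ + 1) * max M 1)) ≤ 1 := min_le_left _ _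
        linarith
      · have hsIcc : s ∈ Icc (0:ℝ) (R₀+1) := ⟨le_trans hR₀0 hs.1, le_of_lt h⟩
        have hκs : κ s ≤ max M 1 := hM1 s hsIcc
        have hcond := hs.2 s (le_refl s)
        have hκs0 : 0 ≤ κ s := hκ0 s hs.1
        have h1 : s * (s - R₀) * κ s ≤ (R₀ + 1) * (s - R₀) * max M 1 := by
          have hd0 : 0 ≤ s - R₀ := by linarith [hs.1]
          have : s * (s - R₀) ≤ (R₀ + 1) * (s - R₀) :=
            mul_le_mul_of_nonneg_right (le_of_lt h) hd0
          calc s * (s - R₀) * κ s ≤ (R₀ + 1) * (s - R₀) * κ s := by nlinarith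
            _ ≤ (R₀ + 1) * (s - R₀) * (max M 1) := by
                apply mul_le_mul_of_nonneg_left hκs; positivity
        have hkey : 4 * σ₀ ^ 2 ≤ (R₀ + 1) * (s - R₀) * max M 1 := le_trans hcond h1
        have hpos : 0 < (R₀ + 1) * max M 1 := by positivity
        have : 4 * σ₀ ^ 2 / ((R₀ + 1) * max M 1) ≤ s - R₀ := by
          rw [div_le_iff₀ hpos]; nlinarith
        have := min_le_right 1 (4 * σ₀ ^ 2 / ((R₀ + 1) * max M 1))
        have hmin := le_trans (min_le_right 1 (4 * σ₀ ^ 2 / ((R₀ + 1) * max M 1))) ‹4 * σ₀ ^ 2 / ((R₀ + 1) * max M 1) ≤ s - R₀›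
        linarith
    have hδpos : 0 < min 1 (4 * σ₀ ^ 2 / ((R₀ + 1) * max M 1)) := by
      apply lt_min one_pos; positivity
    have := hR₁ ▸ le_csInf hTne hδ
    linarith
  -- κ bound beyond R₁
  have hκR₁ : ∀ r, R₁ < r → 4 * σ₀ ^ 2 ≤ R₁ * (R₁ - R₀) * κ r := by
    intro r hrr
    have htend : Tendsto (fun ε : ℝ => (R₁ + ε) * (R₁ + ε - R₀) * κ r) (𝓝[>] 0)
        (𝓝 (R₁ * (R₁ - R₀) * κ r)) := by
      have : Continuous (fun ε : ℝ => (R₁ + ε) * (R₁ + ε - R₀) * κ r) :=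
        ((continuous_const.add continuous_id).mul
          ((continuous_const.add continuous_id).sub continuous_const)).mul continuous_const
      have h0 := this.tendsto 0
      simp only [add_zero] at h0
      exact h0.mono_left nhdsWithin_le_nhds
    refine ge_of_tendsto htend ?_
    filter_upwards [Ioo_mem_nhdsGT_of_mem (Set.left_mem_Ico.2 (by linarith : (0:ℝ) < r - R₁))]
      with ε hε
    obtain ⟨hε0, hεr⟩ := hε
    obtain ⟨s, hsT, hsl⟩ := (csInf_lt_iff hTbd hTne).1 (hR₁ ▸ (by linarith : sInf T < R₁ + ε))
    have hsR₁ : R₁ ≤ s := hR₁ ▸ csInf_le hTbd hsT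
    have hsr : s ≤ r := by linarith
    have hcond := hsT.2 r hsr
    have hκr0 : 0 ≤ κ r := hκ0 r (le_trans hsT.1 hsr)
    have h1 : s * (s - R₀) ≤ (R₁ + ε) * (R₁ + ε - R₀) := by
      have hs0 : 0 ≤ s := le_trans hR₀0 hsT.1
      have : 0 ≤ s - R₀ := by linarith [hsT.1]
      nlinarith
    nlinarith
  have hφf : φ = fun r => Real.exp (-(1 / (2 * σ₀ ^ 2)) * ∫ s in (0:ℝ)..r, s * max 0 (-κ s)) :=
    funext hφ
  have hφpos : ∀ x, 0 < φ x := fun x => hφ x ▸ Real.exp_pos _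
  have hmcont : ContinuousOn (fun s => s * max 0 (-κ s)) (Ici 0) :=
    (continuousOn_id.mul ((continuous_const.max continuous_neg).comp_continuousOn hκc))
  have hmint : ∀ a b : ℝ, 0 ≤ a → 0 ≤ b →
      IntervalIntegrable (fun s => s * max 0 (-κ s)) volume a b := by
    intro a b ha hb
    exact (hmcont.mono (fun x hx => le_trans (le_min ha hb) hx.1)).intervalIntegrable
  have hmnonneg : ∀ s : ℝ, 0 ≤ s → 0 ≤ s * max 0 (-κ s) :=
    fun s hs => mul_nonneg hs (le_max_left _ _)
  -- FTC for the primitive P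
  have hP : ∀ x : ℝ, 0 < x → HasDerivAt (fun y => ∫ s in (0:ℝ)..y, s * max 0 (-κ s))
      (x * max 0 (-κ x)) x := by
    intro x hx
    refine integral_hasDerivAt_right (hmint 0 x le_rfl (le_of_lt hx)) ?_ ?_
    · exact (hmcont.mono (fun y hy => le_of_lt hy)).stronglyMeasurableAtFilter isOpen_Ioi x hx
    · exact hmcont.continuousAt (Ici_mem_nhds hx)
  have hφd : ∀ x : ℝ, 0 < x →
      HasDerivAt φ (φ x * (-(1 / (2 * σ₀ ^ 2)) * (x * max 0 (-κ x)))) x := by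
    intro x hx
    rw [hφf]
    exact ((hP x hx).const_mul (-(1 / (2 * σ₀ ^ 2)))).exp
  -- continuity of φ on Ici 0
  have hPcont : ∀ B : ℝ, 0 ≤ B →
      ContinuousOn (fun y => ∫ s in (0:ℝ)..y, s * max 0 (-κ s)) (Icc 0 B) := by
    intro B hB
    have := intervalIntegral.continuousOn_primitive_interval
      (f := fun s => s * max 0 (-κ s)) (a := (0:ℝ)) (b := B) (μ := volume)
      ((hmcont.mono (by rw [uIcc_of_le hB]; exact fun x hx => hx.1)).integrableOn_compact
        (by rw [uIcc_of_le hB]; exact isCompact_Icc))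
    rwa [uIcc_of_le hB] at this
  have hcont_of_Icc : ∀ (F : ℝ → ℝ), (∀ B, 0 ≤ B → ContinuousOn F (Icc 0 B)) →
      ContinuousOn F (Ici 0) := by
    intro F hF x hx
    have hx' : (0:ℝ) ≤ x := hx
    have hx1 : x ∈ Icc (0:ℝ) (x + 1) := ⟨hx', by linarith⟩
    refine (hF (x+1) (by linarith : (0:ℝ) ≤ x+1) x hx1).mono_of_mem_nhdsWithin ?_
    rw [← Ici_inter_Iic]
    exact inter_mem_nhdsWithin _ (Iic_mem_nhds (by linarith))
  have hφcont : ContinuousOn φ (Ici 0) := by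
    rw [hφf]
    refine hcont_of_Icc _ (fun B hB => ?_)
    exact (Real.continuous_exp.comp_continuousOn ((hPcont B hB).const_smul
      (-(1 / (2 * σ₀ ^ 2))))).congr (fun x _ => by simp [smul_eq_mul])
  have hφint : ∀ a b : ℝ, 0 ≤ a → 0 ≤ b → IntervalIntegrable φ volume a b :=
    fun a b ha hb => (hφcont.mono (fun x hx => le_trans (le_min ha hb) hx.1)).intervalIntegrable
  have hφle1 : ∀ x, 0 ≤ x → φ x ≤ 1 := by
    intro x hx
    rw [hφ x, Real.exp_le_one_iff]
    have h0 : 0 ≤ ∫ s in (0:ℝ)..x, s * max 0 (-κ s) :=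
      intervalIntegral.integral_nonneg hx (fun u hu => hmnonneg u hu.1)
    have hc : 0 < 1 / (2 * σ₀ ^ 2) := by positivity
    nlinarith [mul_nonneg (le_of_lt hc) h0]
  have hφanti : ∀ a b : ℝ, 0 ≤ a → a ≤ b → φ b ≤ φ a := by
    intro a b ha hab
    rw [hφ a, hφ b, Real.exp_le_exp]
    have hsplit := intervalIntegral.integral_add_adjacent_intervals
      (hmint 0 a le_rfl ha) (hmint a b ha (le_trans ha hab))
    have h0 : 0 ≤ ∫ s in a..b, s * max 0 (-κ s) :=
      intervalIntegral.integral_nonneg hab (fun u hu => hmnonneg u (le_trans ha hu.1))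
    have hc : 0 < 1 / (2 * σ₀ ^ 2) := by positivity
    rw [← hsplit]
    nlinarith [mul_nonneg (le_of_lt hc) h0]
  have hφconst : ∀ x, R₀ ≤ x → φ x = φ R₀ := by
    intro x hx
    have hx0 : 0 ≤ x := le_trans hR₀0 hx
    rw [hφ x, hφ R₀]
    have hz : ∫ s in R₀..x, s * max 0 (-κ s) = 0 := by
      rw [intervalIntegral.integral_congr (g := fun _ => (0:ℝ))
        (fun s hs => ?_), intervalIntegral.integral_zero]
      rw [uIcc_of_le hx] at hs
      have : 0 ≤ κ s := hκ0 s hs.1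
      simp only [max_eq_left (by linarith : -κ s ≤ 0)]
      ring
    have hsplit := intervalIntegral.integral_add_adjacent_intervals
      (hmint 0 R₀ le_rfl hR₀0) (hmint R₀ x hR₀0 hx0)
    rw [hz, add_zero] at hsplit
    rw [← hsplit]
  -- Φ facts
  have hΦf : Φ = fun r => ∫ s in (0:ℝ)..r, φ s := funext hΦ
  have hΦd : ∀ x : ℝ, 0 < x → HasDerivAt Φ (φ x) x := by
    intro x hx
    rw [hΦf]
    refine integral_hasDerivAt_right (hφint 0 x le_rfl (le_of_lt hx)) ?_ ?_
    · exact (hφcont.mono (fun y hy => le_of_lt hy)).stronglyMeasurableAtFilter isOpen_Ioi x hx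
    · exact hφcont.continuousAt (Ici_mem_nhds hx)
  have hΦcont : ContinuousOn Φ (Ici 0) := by
    rw [hΦf]
    refine hcont_of_Icc _ (fun B hB => ?_)
    have := intervalIntegral.continuousOn_primitive_interval (f := φ) (a := (0:ℝ)) (b := B)
      (μ := volume) ((hφcont.mono (by rw [uIcc_of_le hB]; exact fun x hx => hx.1)).integrableOn_compact
        (by rw [uIcc_of_le hB]; exact isCompact_Icc))
    rwa [uIcc_of_le hB] at this
  have hΦnonneg : ∀ x, 0 ≤ x → 0 ≤ Φ x := by
    intro x hx
    rw [hΦ x]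
    exact intervalIntegral.integral_nonneg hx (fun u _ => le_of_lt (hφpos u))
  have hΦlb : ∀ x, 0 ≤ x → x * φ x ≤ Φ x := by
    intro x hx
    rw [hΦ x]
    calc x * φ x = ∫ _ in (0:ℝ)..x, φ x := by rw [intervalIntegral.integral_const]; simp
      _ ≤ ∫ s in (0:ℝ)..x, φ s := by
          refine intervalIntegral.integral_mono_on hx intervalIntegrable_const
            (hφint 0 x le_rfl hx) (fun u hu => hφanti u x hu.1 hu.2)
  have hΦsplit : ∀ a b : ℝ, 0 ≤ a → 0 ≤ b → Φ b = Φ a + ∫ s in a..b, φ s := by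
    intro a b ha hb
    rw [hΦ a, hΦ b, ← intervalIntegral.integral_add_adjacent_intervals
      (hφint 0 a le_rfl ha) (hφint a b ha hb)]
  have hΦzero : Φ 0 = 0 := by rw [hΦ 0, intervalIntegral.integral_same]
  have hR₀R₁le' : R₀ < R₁ := hR₀R₁
  have hR₁0 : 0 < R₁ := lt_of_le_of_lt hR₀0 hR₀R₁
  have hqcont : ContinuousOn (fun s => Φ s / φ s) (Ici 0) :=
    hΦcont.div hφcont (fun x _ => ne_of_gt (hφpos x))
  have hqint : ∀ a b : ℝ, 0 ≤ a → 0 ≤ b →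
      IntervalIntegrable (fun s => Φ s / φ s) volume a b :=
    fun a b ha hb => (hqcont.mono (fun x hx => le_trans (le_min ha hb) hx.1)).intervalIntegrable
  have hqnonneg : ∀ s : ℝ, 0 ≤ s → 0 ≤ Φ s / φ s :=
    fun s hs => div_nonneg (hΦnonneg s hs) (le_of_lt (hφpos s))
  set G : ℝ → ℝ := fun x => ∫ s in (0:ℝ)..x, Φ s / φ s with hG
  set I : ℝ := G R₁ with hI
  have hlI : l = I⁻¹ := hl
  have hq_ge_id : ∀ s ∈ Icc (0:ℝ) R₁, s ≤ Φ s / φ s := by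
    intro s hs
    rw [le_div_iff₀ (hφpos s)]
    exact hΦlb s hs.1
  have hI_lb : R₁ ^ 2 / 2 ≤ I := by
    have := intervalIntegral.integral_mono_on (le_of_lt hR₁0)
      (intervalIntegrable_id) (hqint 0 R₁ le_rfl (le_of_lt hR₁0)) hq_ge_id
    rw [integral_id] at this
    norm_num at this
    simpa [hI, hG] using this
  have hIpos : 0 < I := lt_of_lt_of_le (by positivity) hI_lb
  have hlpos : 0 < l := hlI ▸ inv_pos.2 hIpos
  have hlImul : l * I = 1 := by rw [hlI]; field_simp
  -- G facts
  have hGsplit : ∀ a b : ℝ, 0 ≤ a → 0 ≤ b → G b = G a + ∫ s in a..b, Φ s / φ s := by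
    intro a b ha hb
    rw [hG]
    simp only
    rw [← intervalIntegral.integral_add_adjacent_intervals (hqint 0 a le_rfl ha) (hqint a b ha hb)]
  have hGmin_mem : ∀ x : ℝ, 0 ≤ x → min x R₁ ∈ Icc (0:ℝ) R₁ :=
    fun x hx => ⟨le_min hx (le_of_lt hR₁0), min_le_right _ _⟩
  have hGmono : ∀ x : ℝ, 0 ≤ x → G (min x R₁) ≤ I := by
    intro x hx
    have hm := hGmin_mem x hx
    have := hGsplit (min x R₁) R₁ hm.1 (le_of_lt hR₁0)
    have hpos : 0 ≤ ∫ s in (min x R₁)..R₁, Φ s / φ s :=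
      intervalIntegral.integral_nonneg hm.2 (fun u hu => hqnonneg u (le_trans hm.1 hu.1))
    rw [hI, this]
    linarith
  have hGnonneg : ∀ x : ℝ, 0 ≤ x → 0 ≤ G x := by
    intro x hx
    exact intervalIntegral.integral_nonneg hx (fun u hu => hqnonneg u hu.1)
  -- g facts
  have hgmin : ∀ x, g x = 1 - l / 2 * G (min x R₁) := fun x => hg x
  have hg12 : ∀ x, 0 ≤ x → 1/2 ≤ g x := by
    intro x hx
    rw [hgmin x]
    have h1 : l / 2 * G (min x R₁) ≤ l / 2 * I :=
      mul_le_mul_of_nonneg_left (hGmono x hx) (by positivity)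
    have : l / 2 * I = 1 / 2 := by rw [div_mul_eq_mul_div, hlImul]
    linarith
  have hgle1 : ∀ x, 0 ≤ x → g x ≤ 1 := by
    intro x hx
    rw [hgmin x]
    have := mul_nonneg (le_of_lt (by positivity : (0:ℝ) < l / 2))
      (hGnonneg (min x R₁) (hGmin_mem x hx).1)
    linarith
  have hgR₁ : ∀ x, R₁ ≤ x → g x = 1/2 := by
    intro x hx
    rw [hgmin x, min_eq_right hx, ← hI]
    have : l / 2 * I = 1 / 2 := by rw [div_mul_eq_mul_div, hlImul]
    linarith
  have hgcont : ContinuousOn g (Ici 0) := by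
    have hGc : ContinuousOn G (Icc 0 R₁) := by
      have := intervalIntegral.continuousOn_primitive_interval (f := fun s => Φ s / φ s)
        (a := (0:ℝ)) (b := R₁) (μ := volume)
        ((hqcont.mono (by rw [uIcc_of_le (le_of_lt hR₁0)]; exact fun x hx => hx.1)).integrableOn_compact
          (by rw [uIcc_of_le (le_of_lt hR₁0)]; exact isCompact_Icc))
      rwa [uIcc_of_le (le_of_lt hR₁0)] at this
    have hmin : ContinuousOn (fun x : ℝ => min x R₁) (Ici 0) :=
      (continuous_id.min continuous_const).continuousOn
    have hcomp : ContinuousOn (fun x => G (min x R₁)) (Ici 0) :=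
      hGc.comp hmin (fun x hx => hGmin_mem x hx)
    have : ContinuousOn (fun x => 1 - l / 2 * G (min x R₁)) (Ici 0) :=
      continuousOn_const.sub (continuousOn_const.mul hcomp)
    exact this.congr (fun x _ => hgmin x)
  -- f facts
  have hφgcont : ContinuousOn (fun s => φ s * g s) (Ici 0) := hφcont.mul hgcont
  have hφgint : ∀ a b : ℝ, 0 ≤ a → 0 ≤ b →
      IntervalIntegrable (fun s => φ s * g s) volume a b :=
    fun a b ha hb => (hφgcont.mono (fun x hx => le_trans (le_min ha hb) hx.1)).intervalIntegrable
  have hfd : ∀ x : ℝ, 0 < x → HasDerivAt f (φ x * g x) x := by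
    intro x hx
    have hff : f = fun r => ∫ s in (0:ℝ)..r, φ s * g s := funext hf
    rw [hff]
    refine integral_hasDerivAt_right (hφgint 0 x le_rfl (le_of_lt hx)) ?_ ?_
    · exact (hφgcont.mono (fun y hy => le_of_lt hy)).stronglyMeasurableAtFilter isOpen_Ioi x hx
    · exact hφgcont.continuousAt (Ici_mem_nhds hx)
  have hf_le_Φ : ∀ x, 0 ≤ x → f x ≤ Φ x := by
    intro x hx
    rw [hf x, hΦsplit 0 x le_rfl hx]
    rw [hΦzero, zero_add]
    refine intervalIntegral.integral_mono_on hx (hφgint 0 x le_rfl hx) (hφint 0 x le_rfl hx) ?_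
    intro u hu
    have := hgle1 u hu.1
    nlinarith [hφpos u]
  have hfnonneg : ∀ x, 0 ≤ x → 0 ≤ f x := by
    intro x hx
    rw [hf x]
    refine intervalIntegral.integral_nonneg hx (fun u hu => ?_)
    have := hg12 u hu.1
    nlinarith [hφpos u]
  have hflin : ∀ x, R₁ ≤ x → f x = f R₁ + (x - R₁) * (φ R₀ * (1/2)) := by
    intro x hx
    have hx0 : 0 ≤ x := le_trans (le_of_lt hR₁0) hx
    have hsplit := intervalIntegral.integral_add_adjacent_intervals
      (hφgint 0 R₁ le_rfl (le_of_lt hR₁0)) (hφgint R₁ x (le_of_lt hR₁0) hx0)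
    have hcongr : ∫ s in R₁..x, φ s * g s = ∫ s in R₁..x, φ R₀ * (1/2) := by
      refine intervalIntegral.integral_congr (fun s hs => ?_)
      rw [uIcc_of_le hx] at hs
      rw [hgR₁ s hs.1, hφconst s (le_trans (le_of_lt hR₀R₁) hs.1)]
    rw [hf x, hf R₁] at *
    rw [← hsplit, hcongr, intervalIntegral.integral_const, smul_eq_mul]
  -- Φ R₁ value and E*I bound
  have hΦR₁ : Φ R₁ = Φ R₀ + (R₁ - R₀) * φ R₀ := by
    rw [hΦsplit R₀ R₁ hR₀0 (le_of_lt hR₁0)]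
    congr 1
    rw [intervalIntegral.integral_congr (g := fun _ => φ R₀)
      (fun s hs => hφconst s (by rw [uIcc_of_le (le_of_lt hR₀R₁)] at hs; exact hs.1)),
      intervalIntegral.integral_const, smul_eq_mul]
  have hΦs_const : ∀ s, R₀ ≤ s → Φ s = Φ R₀ + (s - R₀) * φ R₀ := by
    intro s hs
    rw [hΦsplit R₀ s hR₀0 (le_trans hR₀0 hs)]
    congr 1
    rw [intervalIntegral.integral_congr (g := fun _ => φ R₀)
      (fun u hu => hφconst u (by rw [uIcc_of_le hs] at hu; exact hu.1)),
      intervalIntegral.integral_const, smul_eq_mul]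
  have hEI : Φ R₀ * (R₁ - R₀) + φ R₀ * (R₁ - R₀) ^ 2 / 2 ≤ φ R₀ * I := by
    have hqeq : ∀ s ∈ uIcc R₀ R₁, Φ s / φ s = Φ R₀ / φ R₀ + (s - R₀) := by
      intro s hs
      rw [uIcc_of_le (le_of_lt hR₀R₁)] at hs
      rw [hφconst s hs.1, hΦs_const s hs.1, add_div, mul_div_assoc,
        div_self (ne_of_gt (hφpos R₀)), mul_one]
    have hval : ∫ s in R₀..R₁, Φ s / φ s
        = (R₁ - R₀) * (Φ R₀ / φ R₀) + (R₁ - R₀) ^ 2 / 2 := by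
      rw [intervalIntegral.integral_congr hqeq]
      have hint1 : IntervalIntegrable (fun _ : ℝ => Φ R₀ / φ R₀) volume R₀ R₁ :=
        intervalIntegrable_const
      have hint2 : IntervalIntegrable (fun s : ℝ => s - R₀) volume R₀ R₁ :=
        ((continuous_id.sub continuous_const).continuousOn).intervalIntegrable
      rw [intervalIntegral.integral_add hint1 hint2, intervalIntegral.integral_const, smul_eq_mul]
      congr 1
      have := intervalIntegral.integral_comp_sub_right (a := R₀) (b := R₁) (fun x => x) R₀
      rw [this, sub_self, integral_id]
      ring
    have hsplit := hGsplit R₀ R₁ hR₀0 (le_of_lt hR₁0)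
    have hG0 : 0 ≤ G R₀ := hGnonneg R₀ hR₀0
    have : (R₁ - R₀) * (Φ R₀ / φ R₀) + (R₁ - R₀) ^ 2 / 2 ≤ I := by
      rw [hI, hsplit, hval]; linarith
    have hφ0 := hφpos R₀
    calc Φ R₀ * (R₁ - R₀) + φ R₀ * (R₁ - R₀) ^ 2 / 2
        = φ R₀ * ((R₁ - R₀) * (Φ R₀ / φ R₀) + (R₁ - R₀) ^ 2 / 2) := by field_simp
      _ ≤ φ R₀ * I := mul_le_mul_of_nonneg_left this (le_of_lt hφ0)
  -- ======== per-point argument ========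
  intro r hr hrne
  have hr0 : (0:ℝ) ≤ r := le_of_lt hr
  have hev : deriv f =ᶠ[𝓝 r] (fun x => φ x * g x) := by
    filter_upwards [Ioi_mem_nhds hr] with x hx
    exact (hfd x hx).deriv
  have hσ2 : (0:ℝ) < 2 * σ₀ ^ 2 := by positivity
  rcases lt_or_gt_of_ne hrne with hlt | hlt
  · -- case r < R₁
    have hGd : HasDerivAt G (Φ r / φ r) r := by
      rw [hG]
      refine integral_hasDerivAt_right (hqint 0 r le_rfl hr0) ?_ ?_
      · exact (hqcont.mono (fun y hy => le_of_lt hy)).stronglyMeasurableAtFilter isOpen_Ioi r hr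
      · exact hqcont.continuousAt (Ici_mem_nhds hr)
    have hgev : g =ᶠ[𝓝 r] (fun x => 1 - l / 2 * G x) := by
      filter_upwards [Iio_mem_nhds hlt] with x hx
      rw [hgmin x, min_eq_left (le_of_lt hx)]
    have hgd : HasDerivAt g (-(l / 2 * (Φ r / φ r))) r :=
      ((hGd.const_mul (l / 2)).const_sub 1).congr_of_eventuallyEq hgev
    have hφgd : HasDerivAt (fun x => φ x * g x)
        (φ r * (-(1 / (2 * σ₀ ^ 2)) * (r * max 0 (-κ r))) * g r
          + φ r * (-(l / 2 * (Φ r / φ r)))) r := (hφd r hr).mul hgd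
    have hdf2 := hφgd.congr_of_eventuallyEq hev
    refine ⟨(hfd r hr).differentiableAt, hdf2.differentiableAt, ?_⟩
    rw [hdf2.deriv, (hfd r hr).deriv]
    have hA : (0:ℝ) ≤ max 0 (-κ r) + κ r := by
      have := le_max_right (0:ℝ) (-κ r); linarith
    have hφg0 : 0 ≤ φ r * g r :=
      mul_nonneg (le_of_lt (hφpos r)) (by linarith only [hg12 r hr0])
    have ht1 : 0 ≤ 1 / (2 * σ₀ ^ 2) * r * ((max 0 (-κ r) + κ r) * (φ r * g r)) := by
      have h1 : (0:ℝ) ≤ 1 / (2 * σ₀ ^ 2) * r := by positivity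
      exact mul_nonneg h1 (mul_nonneg hA hφg0)
    have heq : φ r * (l / 2 * (Φ r / φ r)) = l / 2 * Φ r := by
      have h0 : φ r * (Φ r / φ r) = Φ r := by
        rw [mul_comm, div_mul_cancel₀ _ (ne_of_gt (hφpos r))]
      calc φ r * (l / 2 * (Φ r / φ r)) = l / 2 * (φ r * (Φ r / φ r)) := by ring
        _ = l / 2 * Φ r := by rw [h0]
    have ht2 : 0 ≤ l / 2 * (Φ r - f r) :=
      mul_nonneg (by positivity) (by linarith only [hf_le_Φ r hr0])
    have e1 : φ r * (-(1 / (2 * σ₀ ^ 2)) * (r * max 0 (-κ r))) * g r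
        + φ r * (-(l / 2 * (Φ r / φ r))) - 1 / (2 * σ₀ ^ 2) * r * κ r * (φ r * g r)
        = -(1 / (2 * σ₀ ^ 2) * r * ((max 0 (-κ r) + κ r) * (φ r * g r)))
          - φ r * (l / 2 * (Φ r / φ r)) := by ring
    rw [heq] at e1
    rw [e1]
    linarith only [ht1, ht2]
  · -- case r > R₁
    have hrR₀ : R₀ < r := lt_trans hR₀R₁ hlt
    have hκr0 : 0 ≤ κ r := hκ0 r (le_of_lt hrR₀)
    have hAzero : max 0 (-κ r) = 0 := max_eq_left (by linarith)
    have hgev : g =ᶠ[𝓝 r] (fun _ => (1:ℝ)/2) := by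
      filter_upwards [Ioi_mem_nhds hlt] with x hx
      exact hgR₁ x (le_of_lt hx)
    have hgd : HasDerivAt g 0 r := (hasDerivAt_const r ((1:ℝ)/2)).congr_of_eventuallyEq hgev
    have hφgd : HasDerivAt (fun x => φ x * g x)
        (φ r * (-(1 / (2 * σ₀ ^ 2)) * (r * max 0 (-κ r))) * g r + φ r * 0) r :=
      (hφd r hr).mul hgd
    have hdf2 := hφgd.congr_of_eventuallyEq hev
    refine ⟨(hfd r hr).differentiableAt, hdf2.differentiableAt, ?_⟩
    rw [hdf2.deriv, (hfd r hr).deriv, hAzero, hgR₁ r (le_of_lt hlt)]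
    have hφrE : φ r = φ R₀ := hφconst r (le_of_lt hrR₀)
    rw [hφrE]
    -- numeric inequality
    obtain ⟨E, hE⟩ : ∃ x : ℝ, x = φ R₀ := ⟨_, rfl⟩
    obtain ⟨K, hK⟩ : ∃ x : ℝ, x = κ r := ⟨_, rfl⟩
    obtain ⟨P, hP2⟩ : ∃ x : ℝ, x = Φ R₀ := ⟨_, rfl⟩
    obtain ⟨D, hD2⟩ : ∃ x : ℝ, x = R₁ - R₀ := ⟨_, rfl⟩
    obtain ⟨t, ht2⟩ : ∃ x : ℝ, x = r - R₁ := ⟨_, rfl⟩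
    obtain ⟨J, hJ⟩ : ∃ x : ℝ, x = I := ⟨_, rfl⟩
    rw [← hE, ← hK]
    have hEpos : 0 < E := by rw [hE]; exact hφpos R₀
    have hPnn : 0 ≤ P := by rw [hP2]; exact hΦnonneg R₀ hR₀0
    have hDpos : 0 < D := by rw [hD2]; linarith only [hR₀R₁]
    have htpos : 0 < t := by rw [ht2]; linarith only [hlt]
    have hR₁D : D ≤ R₁ := by rw [hD2]; linarith only [hR₀0]
    have hκr0' : 0 ≤ K := by rw [hK]; exact hκr0
    have hJpos : 0 < J := by rw [hJ]; exact hIpos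
    have hJlb : R₁ ^ 2 / 2 ≤ J := by rw [hJ]; exact hI_lb
    have hlJ : l = J⁻¹ := by rw [hJ]; exact hlI
    have hEJ : P * D + E * D ^ 2 / 2 ≤ E * J := by rw [hE, hP2, hD2, hJ]; exact hEI
    have hA1 : 4 * σ₀ ^ 2 ≤ R₁ * D * K := by rw [hD2, hK]; exact hκR₁ r hlt
    have hfR₁le : f R₁ ≤ P + D * E := by
      rw [hP2, hD2, hE]
      have := hf_le_Φ R₁ (le_of_lt hR₁0)
      rw [hΦR₁] at this
      linarith only [this]
    have hflin' : f r = f R₁ + t * (E * (1/2)) := by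
      rw [ht2, hE]; exact hflin r (le_of_lt hlt)
    have c1 : 2 * σ₀ ^ 2 * f R₁ ≤ R₁ * K * (E * J) := by
      have e2 : 4 * σ₀ ^ 2 * P ≤ R₁ * D * K * P := mul_le_mul_of_nonneg_right hA1 hPnn
      have e3 : 4 * σ₀ ^ 2 * (E * D / 2) ≤ R₁ * D * K * (E * D / 2) :=
        mul_le_mul_of_nonneg_right hA1
          (by positivity)
      have e4 : R₁ * K * (P * D + E * D ^ 2 / 2) ≤ R₁ * K * (E * J) :=
        mul_le_mul_of_nonneg_left hEJ
          (mul_nonneg (by linarith only [hR₁0] : (0:ℝ) ≤ R₁) hκr0')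
      have e0 : 2 * σ₀ ^ 2 * f R₁ ≤ 2 * σ₀ ^ 2 * (P + D * E) :=
        mul_le_mul_of_nonneg_left hfR₁le (by positivity)
      have e8 : (0:ℝ) ≤ σ₀ ^ 2 * P := by positivity
      linarith only [e0, e2, e3, e4, e8]
    have g1 : 4 * σ₀ ^ 2 ≤ K * R₁ ^ 2 := by
      have h := mul_le_mul_of_nonneg_left hR₁D
        (mul_nonneg hκr0' (by linarith only [hR₁0] : (0:ℝ) ≤ R₁))
      linarith only [hA1, h]
    have c2 : 2 * σ₀ ^ 2 * (t * (E * (1/2))) ≤ t * K * (E * J) := by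
      have e5 : t * E * (4 * σ₀ ^ 2) ≤ t * E * (K * R₁ ^ 2) :=
        mul_le_mul_of_nonneg_left g1 (by positivity)
      have e6 : t * K * E * (R₁ ^ 2 / 2) ≤ t * K * E * J :=
        mul_le_mul_of_nonneg_left hJlb (by positivity)
      have e7 : (0:ℝ) ≤ t * K * (E * J) :=
        mul_nonneg (mul_nonneg (le_of_lt htpos) hκr0')
          (mul_nonneg (le_of_lt hEpos) (le_of_lt hJpos))
      linarith only [e5, e6, e7]
    have key' : 2 * σ₀ ^ 2 * f r ≤ r * K * E * J := by
      rw [hflin']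
      have e9 : r * K * E * J = R₁ * K * (E * J) + t * K * (E * J) := by rw [ht2]; ring
      linarith only [c1, c2, e9]
    have key'' : 2 * σ₀ ^ 2 * (l * f r) ≤ r * K * E := by
      rw [hlJ]
      have h := mul_le_mul_of_nonneg_right key' (le_of_lt (inv_pos.2 hJpos))
      calc 2 * σ₀ ^ 2 * (J⁻¹ * f r) = 2 * σ₀ ^ 2 * f r * J⁻¹ := by ring
        _ ≤ r * K * E * J * J⁻¹ := h
        _ = r * K * E := by
            rw [mul_assoc, mul_inv_cancel₀ (ne_of_gt hJpos), mul_one]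
    rw [← sub_nonneg]
    have h7 : -(l / 2) * f r - (E * (-(1 / (2 * σ₀ ^ 2)) * (r * 0)) * (1 / 2) + E * 0
        - 1 / (2 * σ₀ ^ 2) * r * K * (E * (1 / 2)))
        = (r * K * E - 2 * σ₀ ^ 2 * (l * f r)) / (2 * (2 * σ₀ ^ 2)) := by
      field_simp
      ring
    rw [h7]
    exact div_nonneg (by linarith only [key'']) (by positivity)
end

section
/- The function r ↦ r/Φ(r) is nondecreasing on [R₁, ∞). -/
/-!
The integrand `s * max 0 (-κ s)` is nonnegative on `[0, ∞)`, so `φ` is positive and nonincreasing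
there and `Φ` is concave with `Φ 0 = 0`. For `0 < a ≤ b` this gives `a φ(a) ≤ Φ(a)` and
`Φ(b) - Φ(a) ≤ (b - a) φ(a)`, hence `a Φ(b) ≤ b Φ(a)`. So `r / Φ r` is nondecreasing on all of
`[0, ∞)`, which contains `[R₁, ∞)`.
-/

open Set

namespace AntitoneOn

variable {f : ℝ → ℝ} {a b : ℝ}

theorem integral_le_sub_mul (hab : a ≤ b) (hf : AntitoneOn f (Icc a b)) :
    ∫ x in a..b, f x ≤ (b - a) * f a := by
  calc ∫ x in a..b, f x ≤ ∫ _ in a..b, f a :=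
        intervalIntegral.integral_mono_on hab (uIcc_of_le hab ▸ hf).intervalIntegrable
          intervalIntegrable_const fun x hx => hf ⟨le_rfl, hab⟩ hx hx.1
    _ = (b - a) * f a := by simp

theorem sub_mul_le_integral (hab : a ≤ b) (hf : AntitoneOn f (Icc a b)) :
    (b - a) * f b ≤ ∫ x in a..b, f x := by
  calc (b - a) * f b = ∫ _ in a..b, f b := by simp
    _ ≤ ∫ x in a..b, f x :=
        intervalIntegral.integral_mono_on hab intervalIntegrable_const
          (uIcc_of_le hab ▸ hf).intervalIntegrable fun x hx => hf hx ⟨hab, le_rfl⟩ hx.2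

theorem monotoneOn_div_integral (hf : AntitoneOn f (Ici 0)) (hpos : ∀ x ∈ Ici 0, 0 < f x) :
    MonotoneOn (fun r => r / ∫ x in (0 : ℝ)..r, f x) (Ici 0) := by
  have hf_Icc : ∀ {c d : ℝ}, 0 ≤ c → AntitoneOn f (Icc c d) :=
    fun hc => hf.mono fun x hx => hc.trans hx.1
  have hlow : ∀ r, 0 ≤ r → r * f r ≤ ∫ x in (0 : ℝ)..r, f x := fun r hr => by
    simpa using sub_mul_le_integral hr (hf_Icc le_rfl)
  have hint_pos : ∀ r, 0 < r → 0 < ∫ x in (0 : ℝ)..r, f x :=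
    fun r hr => (mul_pos hr (hpos r hr.le)).trans_le (hlow r hr.le)
  intro a (ha : 0 ≤ a) b (hb : 0 ≤ b) hab
  rcases ha.eq_or_lt with rfl | ha
  · simpa using div_nonneg hb (hlow b hb |>.trans' (mul_nonneg hb (hpos b hb).le))
  have hsplit : ∫ x in (0 : ℝ)..b, f x = (∫ x in (0 : ℝ)..a, f x) + ∫ x in a..b, f x :=
    (intervalIntegral.integral_add_adjacent_intervals
      (uIcc_of_le ha.le ▸ hf_Icc le_rfl).intervalIntegrable
      (uIcc_of_le hab ▸ hf_Icc ha.le).intervalIntegrable).symm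
  have hstep := integral_le_sub_mul hab (hf_Icc ha.le)
  dsimp only
  rw [div_le_div_iff₀ (hint_pos a ha) (hint_pos b (ha.trans_le hab)), hsplit]
  nlinarith [hlow a ha.le]

end AntitoneOn

theorem monotoneOn_integral_of_nonneg {g : ℝ → ℝ} (hg : ContinuousOn g (Ici 0))
    (hg₀ : ∀ x ∈ Ici 0, 0 ≤ g x) : MonotoneOn (fun r => ∫ x in (0 : ℝ)..r, g x) (Ici 0) :=
  fun a (ha : 0 ≤ a) b (hb : 0 ≤ b) hab =>
    intervalIntegral.integral_mono_interval le_rfl ha hab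
      ((MeasureTheory.ae_restrict_iff' measurableSet_Ioc).2 <|
        .of_forall fun x hx => hg₀ x hx.1.le)
      (hg.mono fun _ hx => (le_min le_rfl hb).trans hx.1).intervalIntegrable

theorem r_div_Phi_monotone_general
    (σ₀ : ℝ)
    (κ : ℝ → ℝ) (hκc : ContinuousOn κ (Set.Ici 0))
    (R₀ : ℝ) (hR₀ : R₀ = sInf {s : ℝ | 0 ≤ s ∧ ∀ r ≥ s, 0 ≤ κ r})
    (R₁ : ℝ) (hR₁ : R₁ = sInf {s : ℝ | R₀ ≤ s ∧ ∀ r ≥ s, 4 * σ₀ ^ 2 ≤ s * (s - R₀) * κ r})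
    (φ : ℝ → ℝ)
    (hφ : ∀ r, φ r = Real.exp (-(1 / (2 * σ₀ ^ 2)) * ∫ s in (0:ℝ)..r, s * max 0 (-κ s)))
    (Φ : ℝ → ℝ) (hΦ : ∀ r, Φ r = ∫ s in (0:ℝ)..r, φ s) :
    MonotoneOn (fun r => r / Φ r) (Set.Ici R₁) := by
  have hR₀_nonneg : 0 ≤ R₀ := hR₀ ▸ Real.sInf_nonneg fun _ hs => hs.1
  have hR₁_nonneg : 0 ≤ R₁ := hR₁ ▸ Real.sInf_nonneg fun _ hs => hR₀_nonneg.trans hs.1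
  have hexponent : AntitoneOn (fun r => -(1 / (2 * σ₀ ^ 2)) * ∫ s in (0:ℝ)..r, s * max 0 (-κ s))
      (Ici 0) := fun a ha b hb hab =>
    mul_le_mul_of_nonpos_left
      (monotoneOn_integral_of_nonneg (continuousOn_id.mul (continuousOn_const.sup hκc.neg))
        (fun s hs => mul_nonneg hs (le_max_left _ _)) ha hb hab)
      (neg_nonpos.2 (by positivity))
  have hφ_anti : AntitoneOn φ (Ici 0) := funext hφ ▸ Real.exp_monotone.comp_antitoneOn hexponent
  rw [funext hΦ]
  exact (hφ_anti.monotoneOn_div_integral fun x _ => hφ x ▸ Real.exp_pos _).mono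
    (Ici_subset_Ici.2 hR₁_nonneg)

/-- The function `r ↦ r / Φ(r)` is nondecreasing on `[R₁, ∞)`. -/
theorem r_div_Phi_monotone
    (σ₀ : ℝ) (hσ₀ : 0 < σ₀)
    (κ : ℝ → ℝ) (hκc : ContinuousOn κ (Set.Ici 0))
    (hκ : ∃ c > 0, ∀ᶠ r in Filter.atTop, c ≤ κ r)
    (R₀ : ℝ) (hR₀ : R₀ = sInf {s : ℝ | 0 ≤ s ∧ ∀ r ≥ s, 0 ≤ κ r})
    (R₁ : ℝ) (hR₁ : R₁ = sInf {s : ℝ | R₀ ≤ s ∧ ∀ r ≥ s, 4 * σ₀ ^ 2 ≤ s * (s - R₀) * κ r})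
    (φ : ℝ → ℝ)
    (hφ : ∀ r, φ r = Real.exp (-(1 / (2 * σ₀ ^ 2)) * ∫ s in (0:ℝ)..r, s * max 0 (-κ s)))
    (Φ : ℝ → ℝ) (hΦ : ∀ r, Φ r = ∫ s in (0:ℝ)..r, φ s) :
    MonotoneOn (fun r => r / Φ r) (Set.Ici R₁) :=
  r_div_Phi_monotone_general σ₀ κ hκc R₀ hR₀ R₁ hR₁ φ hφ Φ hΦ
end

section
/- Let γ > 0 and r₀ ≥ 0 be such that κ(r) ≥ γ/2 for all r ≥ r₀. Then R₀ ≤ r₀ and R₁ ≤ max(r₀, (R₀ + √(R₀² + 32σ₀²/γ))/2). -/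
open Filter Set

/-- If `κ(r) ≥ γ/2` for all `r ≥ r₀`, then `R₀ ≤ r₀` and
`R₁ ≤ max(r₀, (R₀ + √(R₀² + 32σ₀²/γ))/2)`. -/
theorem R1_upper_bound
    (σ₀ : ℝ) (hσ₀ : 0 < σ₀)
    (κ : ℝ → ℝ) (hκc : ContinuousOn κ (Set.Ici 0))
    (hκ : ∃ c > 0, ∀ᶠ r in Filter.atTop, c ≤ κ r)
    (R₀ : ℝ) (hR₀ : R₀ = sInf {s : ℝ | 0 ≤ s ∧ ∀ r ≥ s, 0 ≤ κ r})
    (R₁ : ℝ) (hR₁ : R₁ = sInf {s : ℝ | R₀ ≤ s ∧ ∀ r ≥ s, 4 * σ₀ ^ 2 ≤ s * (s - R₀) * κ r})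
    (γ r₀ : ℝ) (hγ : 0 < γ) (hr₀ : 0 ≤ r₀)
    (hbound : ∀ r ≥ r₀, γ / 2 ≤ κ r) :
    R₀ ≤ r₀ ∧
    R₁ ≤ max r₀ ((R₀ + Real.sqrt (R₀ ^ 2 + 32 * σ₀ ^ 2 / γ)) / 2) := by
  have hmem0 : r₀ ∈ {s : ℝ | 0 ≤ s ∧ ∀ r ≥ s, 0 ≤ κ r} :=
    ⟨hr₀, fun r hr => le_trans (by positivity) (hbound r hr)⟩
  have hR0le : R₀ ≤ r₀ := by
    rw [hR₀]; exact csInf_le ⟨0, fun s hs => hs.1⟩ hmem0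
  have h0 : (0:ℝ) ≤ R₀ := by
    rw [hR₀]; exact le_csInf ⟨r₀, hmem0⟩ (fun s hs => hs.1)
  refine ⟨hR0le, ?_⟩
  set D : ℝ := R₀ ^ 2 + 32 * σ₀ ^ 2 / γ with hD
  have hDpos : 0 ≤ D := by positivity
  have hsqrt : Real.sqrt D ^ 2 = D := Real.sq_sqrt hDpos
  set t : ℝ := (R₀ + Real.sqrt D) / 2 with htdef
  have hR0sqrt : R₀ ≤ Real.sqrt D := by
    have h1 : Real.sqrt (R₀ ^ 2) ≤ Real.sqrt D := by
      apply Real.sqrt_le_sqrt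
      have : 0 ≤ 32 * σ₀ ^ 2 / γ := by positivity
      rw [hD]; linarith
    rwa [Real.sqrt_sq h0] at h1
  have htR0 : R₀ ≤ t := by rw [htdef]; linarith
  have ht : t * (t - R₀) = 8 * σ₀ ^ 2 / γ := by
    have hexp : Real.sqrt D * Real.sqrt D = D := Real.mul_self_sqrt hDpos
    have hcancel : 32 * σ₀ ^ 2 / γ * γ = 32 * σ₀ ^ 2 := by field_simp
    rw [hD] at hexp
    simp only [htdef]
    field_simp
    linear_combination γ * hexp + hcancel
  set M : ℝ := max r₀ t with hM
  have hMt : t ≤ M := le_max_right _ _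
  have hMr0 : r₀ ≤ M := le_max_left _ _
  have hMR0 : R₀ ≤ M := le_trans htR0 hMt
  have hkey : 8 * σ₀ ^ 2 / γ ≤ M * (M - R₀) := by
    nlinarith [mul_nonneg (sub_nonneg.2 hMt) (by linarith : 0 ≤ M + t - R₀)]
  rw [hR₁]
  apply csInf_le ⟨R₀, fun s hs => hs.1⟩
  refine ⟨hMR0, fun r hr => ?_⟩
  have hκr : γ / 2 ≤ κ r := hbound r (le_trans hMr0 hr)
  have hMM : 0 ≤ M * (M - R₀) := le_trans (by positivity) hkey
  have h2 : M * (M - R₀) * (γ / 2) ≤ M * (M - R₀) * κ r :=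
    mul_le_mul_of_nonneg_left hκr hMM
  have h3 : 8 * σ₀ ^ 2 / γ * γ = 8 * σ₀ ^ 2 := by field_simp
  nlinarith [hkey, h2]
end

section
/- Let β > 0 and ε ≥ 0, and let v : [0,∞) → [0,∞) be differentiable with v'(t) ≤ −2β·v(t) + ε·√(v(t)) for all t ≥ 0. Then for every t ≥ 0, √(v(t)) ≤ e^{−βt}·√(v(0)) + ε/(2β). -/
/-!
Fencing argument: for every `δ > 0` the function `u(t) = e^{-βt}·√(v 0) + ε/(2β) + δ`
is positive and satisfies `u' > -βu + ε/2`, so `u²` is a strict supersolution of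
`w' = -2βw + ε√w`.
Hence `v` can never reach `u²` from below, and letting `δ → 0` gives the bound.
-/

open Set Real

section SqrtComparison

variable {β ε : ℝ} {v v' u u' : ℝ → ℝ}

theorem sqrt_le_of_strict_supersolution
    (hv_deriv : ∀ t ≥ (0:ℝ), HasDerivWithinAt v (v' t) (Ici 0) t)
    (hv_ineq : ∀ t ≥ (0:ℝ), v' t ≤ -2 * β * v t + ε * √(v t))
    (hu_deriv : ∀ t, HasDerivAt u (u' t) t) (hu_pos : ∀ t ≥ (0:ℝ), 0 < u t)
    (hu_super : ∀ t ≥ (0:ℝ), -β * u t + ε / 2 < u' t)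
    (h0 : √(v 0) ≤ u 0) {t : ℝ} (ht : 0 ≤ t) : √(v t) ≤ u t := by
  rw [sqrt_le_left (hu_pos t ht).le]
  refine image_le_of_deriv_right_lt_deriv_boundary (B := fun x => u x ^ 2)
    (B' := fun x => 2 * u x * u' x)
    (fun x hx => (hv_deriv x hx.1).continuousWithinAt.mono Icc_subset_Ici_self)
    (fun x hx => (hv_deriv x hx.1).mono (Ici_subset_Ici.2 hx.1))
    ((sqrt_le_left (hu_pos 0 le_rfl).le).1 h0)
    (fun x => by simpa [mul_comm, mul_assoc] using (hu_deriv x).fun_pow 2) ?_ ⟨ht, le_rfl⟩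
  intro x hx hvx
  have hux : 0 < u x := hu_pos x hx.1
  have hsqrt : √(v x) = u x := by rw [hvx]; exact sqrt_sq hux.le
  calc v' x ≤ -2 * β * v x + ε * √(v x) := hv_ineq x hx.1
    _ = 2 * u x * (-β * u x + ε / 2) := by rw [hsqrt, hvx]; ring
    _ < 2 * u x * u' x := mul_lt_mul_of_pos_left (hu_super x hx.1) (by positivity)

theorem sqrt_le_exp_mul_sqrt_add_add (hβ : 0 < β) (hε : 0 ≤ ε)
    (hv_deriv : ∀ t ≥ (0:ℝ), HasDerivWithinAt v (v' t) (Ici 0) t)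
    (hv_ineq : ∀ t ≥ (0:ℝ), v' t ≤ -2 * β * v t + ε * √(v t))
    {δ : ℝ} (hδ : 0 < δ) {t : ℝ} (ht : 0 ≤ t) :
    √(v t) ≤ exp (-β * t) * √(v 0) + ε / (2 * β) + δ := by
  have hε2β : β * (ε / (2 * β)) = ε / 2 := by field_simp
  refine sqrt_le_of_strict_supersolution
    (u := fun x => exp (-β * x) * √(v 0) + ε / (2 * β) + δ)
    (u' := fun x => exp (-β * x) * (-β) * √(v 0)) hv_deriv hv_ineq
    (fun x => (((((hasDerivAt_id x).const_mul (-β)).exp.mul_const _).add_const _).add_const _)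
      |>.congr_deriv (by simp))
    (fun x _ => by positivity) (fun x _ => ?_) ?_ ht
  · have hβδ : 0 < β * δ := mul_pos hβ hδ
    linear_combination hβδ - hε2β
  · have hc : 0 ≤ ε / (2 * β) := by positivity
    simp only [mul_zero, exp_zero, one_mul]
    linarith

end SqrtComparison

theorem sqrt_gronwall_general
    (β ε : ℝ) (hβ : 0 < β) (hε : 0 ≤ ε)
    (v v' : ℝ → ℝ)
    (hv_deriv : ∀ t ≥ (0:ℝ), HasDerivWithinAt v (v' t) (Set.Ici 0) t)
    (hv_ineq : ∀ t ≥ (0:ℝ), v' t ≤ -2 * β * v t + ε * Real.sqrt (v t)) :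
    ∀ t ≥ (0:ℝ),
      Real.sqrt (v t) ≤ Real.exp (-β * t) * Real.sqrt (v 0) + ε / (2 * β) := fun _ ht =>
  le_of_forall_pos_le_add fun _ hδ => sqrt_le_exp_mul_sqrt_add_add hβ hε hv_deriv hv_ineq hδ ht

/-- Grönwall-type lemma: if `v : [0,∞) → [0,∞)` is differentiable with
`v'(t) ≤ -2β·v(t) + ε·√(v(t))` for all `t ≥ 0`, then
`√(v(t)) ≤ e^{-βt}·√(v(0)) + ε/(2β)` for every `t ≥ 0`. -/
theorem sqrt_gronwall
    (β ε : ℝ) (hβ : 0 < β) (hε : 0 ≤ ε)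
    (v v' : ℝ → ℝ)
    (hv_nonneg : ∀ t ≥ (0:ℝ), 0 ≤ v t)
    (hv_deriv : ∀ t ≥ (0:ℝ), HasDerivWithinAt v (v' t) (Set.Ici 0) t)
    (hv_ineq : ∀ t ≥ (0:ℝ), v' t ≤ -2 * β * v t + ε * Real.sqrt (v t)) :
    ∀ t ≥ (0:ℝ),
      Real.sqrt (v t) ≤ Real.exp (-β * t) * Real.sqrt (v 0) + ε / (2 * β) :=
  sqrt_gronwall_general β ε hβ hε v v' hv_deriv hv_ineq
end
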